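/- arXiv:1308.5459 — 7 statements merged into one kernel-verified Lean document; each statement's English description precedes it below -/
import Mathlib

section
/- For a uniformly random permutation Π of [n], the random set S_n = {k ∈ [n-1] : Π(k+1) = Π(k) + 1} has the same distribution as the random set T_n = {k ∈ [n-1] : Π(k) = k} of fixed points of Π lying in [n-1]. -/
/-!
By inversion over supersets it suffices to show that for every `A ⊆ [n-1]` the permutations with
`A ⊆ S(π)` and those with `A ⊆ T(π)` are equinumerous; both number `(n - |A|)!`. For `T` these are
the permutations of the complement of `A`. For `S`, gluing `k` to `k+1` for `k ∈ A` cuts `[n]` into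
`n - |A|` blocks of consecutive positions, and `A ⊆ S(π)` says exactly that `π` maps every block
increasingly onto an interval of consecutive values. Such a `π` is determined by the order in
which these intervals occur, and every order of the blocks occurs.
-/

/-- The successor `k+1 mod n`, taking values in `Fin n`. -/
def cyclicSucc {n : ℕ} (j : Fin n) : Fin n := ⟨((j : ℕ) + 1) % n, Nat.mod_lt _ j.pos⟩

open Finset Equiv
open scoped Nat

theorem eq_of_forall_sum_superset_eq {α M : Type*} [Fintype α] [DecidableEq α]
    [AddCancelCommMonoid M] {f g : Finset α → M}
    (h : ∀ A, ∑ B with A ⊆ B, f B = ∑ B with A ⊆ B, g B) (A : Finset α) : f A = g A := by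
  have split (F : Finset α → M) (A : Finset α) :
      ∑ B with A ⊆ B, F B = F A + ∑ B with A ⊂ B, F B := by
    rw [← add_sum_erase _ _ (mem_filter.2 ⟨mem_univ A, Subset.rfl⟩)]
    congr 2
    ext B
    simp [ssubset_iff_subset_ne, and_comm, eq_comm]
  induction A using Finset.strongDownwardInduction (n := Fintype.card α) with
  | H A ih =>
    have := h A
    rw [split, split, sum_congr rfl fun B hB => ih (card_le_univ B) (mem_filter.1 hB).2] at this
    exact add_right_cancel this
  | _ => exact card_le_univ A

theorem card_perm_fixing {α : Type*} [Fintype α] [DecidableEq α] (s : Finset α) :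
    #({σ | ∀ a ∈ s, σ a = a} : Finset (Perm α)) = (Fintype.card α - #s)! := by
  rw [← Fintype.card_subtype, ← Fintype.card_congr
    ((Perm.subtypeEquivSubtypePerm (· ∉ s)).trans (subtypeEquivRight fun σ => ?_)),
    Fintype.card_perm, Fintype.card_subtype_compl, Fintype.card_coe]
  simp only [not_not]

theorem Fin.card_filter_perm_lt {n : ℕ} (σ : Perm (Fin n)) (v : Fin n) :
    #{p | σ p < v} = v := by
  rw [card_equiv σ (t := Iio v) (by simp), Fin.card_Iio]

theorem exists_perm_lt_iff_lt {α : Type*} [LinearOrder α] {m : ℕ} {a : Fin m → α}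
    (ha : Function.Injective a) : ∃ τ : Perm (Fin m), ∀ i j, τ i < τ j ↔ a i < a j := by
  have hmono : StrictMono (a ∘ Tuple.sort a) :=
    (Tuple.monotone_sort a).strictMono_of_injective (ha.comp (Tuple.sort a).injective)
  refine ⟨(Tuple.sort a).symm, fun i j => ?_⟩
  rw [← hmono.lt_iff_lt]
  simp

theorem card_filter_comp_eq_sum {β γ : Type*} [Fintype β] [Fintype γ] [DecidableEq γ]
    (f : β → γ) (P : γ → Prop) [DecidablePred P] :
    #{x | P (f x)} = ∑ y with P y, #{x | f x = y} := by
  rw [card_eq_sum_card_fiberwise (f := f) (t := {y | P y}) (fun x hx => by simpa using hx)]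
  refine sum_congr rfl fun y hy => congrArg card ?_
  ext x
  simp only [mem_filter, mem_univ, true_and, and_iff_right_iff_imp]
  rintro rfl
  simpa using hy

namespace Composition

variable {n : ℕ} (c : Composition n)

def blockStart (i : Fin c.length) : Fin n := c.embedding i ⟨0, c.one_le_blocksFun i⟩

@[simp]
theorem index_blockStart (i : Fin c.length) : c.index (c.blockStart i) = i :=
  c.index_embedding _ _

theorem card_filter_index_eq (i : Fin c.length) : #{p | c.index p = i} = c.blocksFun i := by
  rw [← card_fin (c.blocksFun i), ← card_map (c.embedding i).toEmbedding]
  congr 1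
  ext p
  simpa [eq_comm] using (c.mem_range_embedding_iff' (j := p) (i := i)).symm

theorem eq_of_index_eq_of_invEmbedding_eq {p q : Fin n} (h : c.index p = c.index q)
    (h' : (c.invEmbedding p : ℕ) = c.invEmbedding q) : p = q := by
  rw [← c.embedding_comp_inv p, ← c.embedding_comp_inv q]
  ext
  simp only [coe_embedding, h]
  simp only [coe_invEmbedding] at h' ⊢
  omega

theorem index_eq_index_iff_castSucc_notMem_boundaries {p q : Fin n} (hq : (q : ℕ) = p + 1) :
    c.index p = c.index q ↔ q.castSucc ∉ c.boundaries := by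
  have hp := c.sizeUpTo_index_le p
  have hp' := c.lt_sizeUpTo_index_succ p
  simp only [Fin.val_succ] at hp'
  rw [← c.mem_range_embedding_iff', c.mem_range_embedding_iff]
  simp only [boundaries, mem_map, mem_univ, true_and, not_exists, Nat.succ_eq_add_one]
  constructor
  · rintro ⟨-, hlt⟩ i hi
    have hi : c.sizeUpTo i = q := (congrArg Fin.val hi).trans (Fin.val_castSucc q)
    rcases le_or_gt (i : ℕ) (c.index p) with hle | hgt
    · have := c.monotone_sizeUpTo hle
      omega
    · have := c.monotone_sizeUpTo (Nat.succ_le_of_lt hgt)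
      simp only [Nat.succ_eq_add_one] at this
      omega
  · intro hne
    refine ⟨by omega, lt_of_not_ge fun hge => hne (c.index p).succ (Fin.ext ?_)⟩
    change c.sizeUpTo (c.index p + 1) = q
    omega

def SuccOnBlocks (π : Perm (Fin n)) : Prop :=
  ∀ p q : Fin n, c.index p = c.index q → (q : ℕ) = p + 1 → (π q : ℕ) = π p + 1

instance : DecidablePred c.SuccOnBlocks := fun _ => by unfold SuccOnBlocks; infer_instance

variable {c} {π : Perm (Fin n)}

theorem SuccOnBlocks.apply_eq (h : c.SuccOnBlocks π) (p : Fin n) :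
    (π p : ℕ) = π (c.blockStart (c.index p)) + c.invEmbedding p := by
  suffices ∀ i (r : ℕ) (hr : r < c.blocksFun i),
      (π (c.embedding i ⟨r, hr⟩) : ℕ) = π (c.blockStart i) + r by
    conv_lhs => rw [← c.embedding_comp_inv p]
    exact this _ _ _
  intro i r hr
  induction r with
  | zero => rfl
  | succ r ih =>
    rw [h (c.embedding i ⟨r, by omega⟩) _ (by simp) (by simp [add_assoc]), ih, add_assoc]

variable (c) in
/-- `c.blockPerm τ` lays the blocks of `c` out, each increasingly, on consecutive intervals of
values in the order given by `τ`; `c.blockOffset τ i` is the first value of block `i`. -/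
def blockOffset (τ : Perm (Fin c.length)) (i : Fin c.length) : ℕ :=
  ∑ j with τ j < τ i, c.blocksFun j

theorem blockOffset_add_le {τ : Perm (Fin c.length)} {i : Fin c.length}
    {s : Finset (Fin c.length)} (hs : ∀ j, τ j ≤ τ i → j ∈ s) :
    c.blockOffset τ i + c.blocksFun i ≤ ∑ j ∈ s, c.blocksFun j := by
  rw [blockOffset, add_comm, ← sum_insert (s := {j | τ j < τ i}) (by simp)]
  refine sum_le_sum_of_subset fun j hj => hs j ?_
  rcases mem_insert.1 hj with rfl | hj
  · exact le_rfl
  · exact (mem_filter.1 hj).2.le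

theorem blockOffset_lt_blockOffset_iff {τ : Perm (Fin c.length)} {i j : Fin c.length} :
    c.blockOffset τ i < c.blockOffset τ j ↔ τ i < τ j := by
  constructor
  · refine fun h => lt_of_not_ge fun hji => h.not_ge (sum_le_sum_of_subset fun k hk => ?_)
    simp only [mem_filter, mem_univ, true_and] at hk ⊢
    exact hk.trans_le hji
  · intro h
    have := blockOffset_add_le (τ := τ) (i := i) (s := {k | τ k < τ j})
      (fun k hk => by simpa using hk.trans_lt h)
    exact (Nat.lt_add_of_pos_right (c.one_le_blocksFun i)).trans_le this

theorem blockOffset_add_invEmbedding_lt (τ : Perm (Fin c.length)) (p : Fin n) :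
    c.blockOffset τ (c.index p) + c.invEmbedding p < n := by
  have := blockOffset_add_le (τ := τ) (i := c.index p) (s := univ) (fun _ _ => mem_univ _)
  rw [c.sum_blocksFun] at this
  omega

theorem blockOffset_add_invEmbedding_injective (τ : Perm (Fin c.length)) :
    Function.Injective fun p => c.blockOffset τ (c.index p) + c.invEmbedding p := by
  have key : ∀ p q : Fin n, τ (c.index p) < τ (c.index q) →
      c.blockOffset τ (c.index p) + c.invEmbedding p < c.blockOffset τ (c.index q) := by
    intro p q h
    have := blockOffset_add_le (τ := τ) (i := c.index p) (s := {k | τ k < τ (c.index q)})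
      (fun k hk => by simpa using hk.trans_lt h)
    exact (Nat.add_lt_add_left (c.invEmbedding p).2 _).trans_le this
  intro p q hpq
  beta_reduce at hpq
  rcases lt_trichotomy (τ (c.index p)) (τ (c.index q)) with h | h | h
  · have := key p q h; omega
  · have hi := τ.injective h
    have := congrArg (c.blockOffset τ) hi
    exact c.eq_of_index_eq_of_invEmbedding_eq hi (by omega)
  · have := key q p h; omega

variable (c) in
noncomputable def blockPerm (τ : Perm (Fin c.length)) : Perm (Fin n) :=
  Equiv.ofBijective (fun p => ⟨_, blockOffset_add_invEmbedding_lt τ p⟩)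
    (Finite.injective_iff_bijective.1 fun _ _ h =>
      blockOffset_add_invEmbedding_injective τ (congrArg Fin.val h))

theorem blockPerm_apply (τ : Perm (Fin c.length)) (p : Fin n) :
    (c.blockPerm τ p : ℕ) = c.blockOffset τ (c.index p) + c.invEmbedding p :=
  rfl

theorem blockPerm_blockStart (τ : Perm (Fin c.length)) (i : Fin c.length) :
    (c.blockPerm τ (c.blockStart i) : ℕ) = c.blockOffset τ i := by
  simp [blockPerm_apply, blockStart]

theorem succOnBlocks_blockPerm (τ : Perm (Fin c.length)) : c.SuccOnBlocks (c.blockPerm τ) := by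
  intro p q h hq
  have := c.sizeUpTo_index_le p
  simp only [blockPerm_apply, coe_invEmbedding, h] at this ⊢
  omega

theorem blockPerm_injective : Function.Injective c.blockPerm := by
  intro τ τ' h
  have hoff : c.blockOffset τ = c.blockOffset τ' := funext fun i => by
    rw [← blockPerm_blockStart, ← blockPerm_blockStart, h]
  ext i
  rw [← Fin.card_filter_perm_lt τ, ← Fin.card_filter_perm_lt τ']
  simp only [← blockOffset_lt_blockOffset_iff, hoff]

theorem SuccOnBlocks.val_blockStart_eq_sum (h : c.SuccOnBlocks π) (i : Fin c.length) :
    (π (c.blockStart i) : ℕ) =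
      ∑ j with π (c.blockStart j) < π (c.blockStart i), c.blocksFun j := by
  have hblock (p : Fin n) :
      π p < π (c.blockStart i) ↔ π (c.blockStart (c.index p)) < π (c.blockStart i) := by
    have hp := h.apply_eq p
    simp only [Fin.lt_def]
    refine ⟨fun hlt => by omega, fun hlt => lt_of_not_ge fun hge => ?_⟩
    -- the block of `p` would pass through the value `π (blockStart i)`, which block `i` takes
    obtain ⟨d, hd⟩ : ∃ d, (π (c.blockStart i) : ℕ) = π (c.blockStart (c.index p)) + d ∧
        d ≤ c.invEmbedding p := ⟨_, (Nat.add_sub_of_le hlt.le).symm, by omega⟩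
    have hdlt : d < c.blocksFun (c.index p) := hd.2.trans_lt (c.invEmbedding p).2
    have hq := h.apply_eq (c.embedding (c.index p) ⟨d, hdlt⟩)
    simp only [index_embedding, invEmbedding_comp] at hq
    have hji : c.index p = i := by
      simpa using congrArg c.index (π.injective (Fin.ext (by omega)) :
        c.embedding (c.index p) ⟨d, hdlt⟩ = c.blockStart i)
    rw [hji] at hlt
    exact lt_irrefl _ hlt
  calc (π (c.blockStart i) : ℕ) = #{p | π p < π (c.blockStart i)} :=
        (Fin.card_filter_perm_lt _ _).symm
    _ = #{p | π (c.blockStart (c.index p)) < π (c.blockStart i)} :=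
        congrArg card (filter_congr fun p _ => hblock p)
    _ = ∑ j with π (c.blockStart j) < π (c.blockStart i), #{p | c.index p = j} :=
        card_filter_comp_eq_sum c.index (fun j => π (c.blockStart j) < π (c.blockStart i))
    _ = _ := by simp_rw [card_filter_index_eq]

theorem SuccOnBlocks.exists_blockPerm_eq (h : c.SuccOnBlocks π) : ∃ τ, c.blockPerm τ = π := by
  have hinj : Function.Injective fun i => π (c.blockStart i) := fun i j hij => by
    simpa using congrArg c.index (π.injective hij)
  obtain ⟨τ, hτ⟩ := exists_perm_lt_iff_lt hinj
  have hoff (i : Fin c.length) : c.blockOffset τ i = π (c.blockStart i) := by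
    rw [h.val_blockStart_eq_sum, blockOffset]
    simp_rw [hτ]
  exact ⟨τ, Equiv.ext fun p => Fin.ext (by rw [blockPerm_apply, hoff, h.apply_eq p])⟩

variable (c) in
theorem card_succOnBlocks : #{π | c.SuccOnBlocks π} = c.length ! := by
  have : ({π | c.SuccOnBlocks π} : Finset (Perm (Fin n))) = univ.image c.blockPerm := by
    ext π
    simp only [mem_filter, mem_univ, true_and, mem_image]
    exact ⟨SuccOnBlocks.exists_blockPerm_eq, fun ⟨τ, hτ⟩ => hτ ▸ succOnBlocks_blockPerm τ⟩
  rw [this, card_image_of_injective _ blockPerm_injective, card_univ, Fintype.card_perm,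
    Fintype.card_fin]

variable {A : Finset (Fin n)}

def ofJoined (A : Finset (Fin n)) (hA : ∀ k ∈ A, (k : ℕ) + 1 < n) : Composition n :=
  CompositionAsSet.toComposition
    { boundaries := {b | ∀ k ∈ A, (k : ℕ) + 1 ≠ b}
      zero_mem := by simp
      getLast_mem := by simpa using fun k hk => (hA k hk).ne }

theorem index_ofJoined_eq_iff (hA : ∀ k ∈ A, (k : ℕ) + 1 < n) {p q : Fin n}
    (hq : (q : ℕ) = p + 1) : (ofJoined A hA).index p = (ofJoined A hA).index q ↔ p ∈ A := by
  rw [index_eq_index_iff_castSucc_notMem_boundaries _ hq, ofJoined,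
    CompositionAsSet.toComposition_boundaries]
  simp [hq, ← Fin.ext_iff]

theorem length_ofJoined (hA : ∀ k ∈ A, (k : ℕ) + 1 < n) : (ofJoined A hA).length = n - #A := by
  have hcompl : ({x | ∀ k ∈ A, (k : ℕ) + 1 ≠ (x.succ : ℕ)} : Finset (Fin n)) = Aᶜ := by
    ext x
    simp [← Fin.ext_iff]
  have := (ofJoined A hA).card_boundaries_eq_succ_length
  rw [ofJoined, CompositionAsSet.toComposition_boundaries, Fin.card_filter_univ_succ', hcompl,
    card_compl, Fintype.card_fin, if_pos (by simp), CompositionAsSet.toComposition_length] at this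
  rw [ofJoined, CompositionAsSet.toComposition_length]
  omega

end Composition

section Successions

variable {n : ℕ}

theorem cyclicSucc_val_of_lt {k : Fin n} (h : (k : ℕ) + 1 < n) : (cyclicSucc k : ℕ) = k + 1 :=
  Nat.mod_eq_of_lt h

theorem card_perm_apply_cyclicSucc_eq_succ (A : Finset (Fin n)) (hA : ∀ k ∈ A, (k : ℕ) + 1 < n) :
    #{π : Perm (Fin n) | ∀ k ∈ A, (π (cyclicSucc k) : ℕ) = π k + 1} = (n - #A)! := by
  rw [← Composition.length_ofJoined hA, ← Composition.card_succOnBlocks]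
  refine congrArg card (filter_congr fun π _ => ⟨fun h p q hpq hq => ?_, fun h k hk => ?_⟩)
  · have hp := (Composition.index_ofJoined_eq_iff hA hq).1 hpq
    rw [← Fin.ext (cyclicSucc_val_of_lt (hA p hp) |>.trans hq.symm)]
    exact h p hp
  · rw [show cyclicSucc k = ⟨k + 1, hA k hk⟩ from Fin.ext (cyclicSucc_val_of_lt (hA k hk))]
    exact h k _ ((Composition.index_ofJoined_eq_iff hA rfl).2 hk) rfl

def successions (π : Perm (Fin n)) : Finset (Fin n) :=
  {k | (k : ℕ) + 1 < n ∧ (π (cyclicSucc k) : ℕ) = π k + 1}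

def fixedPointsBelowLast (π : Perm (Fin n)) : Finset (Fin n) :=
  {k | (k : ℕ) + 1 < n ∧ π k = k}

theorem card_subset_successions_eq_card_subset_fixedPointsBelowLast (A : Finset (Fin n)) :
    #{π | A ⊆ successions π} = #{π | A ⊆ fixedPointsBelowLast π} := by
  by_cases hA : ∀ k ∈ A, (k : ℕ) + 1 < n
  · have hsub (P : Fin n → Prop) [DecidablePred P] :
        A ⊆ ({k | (k : ℕ) + 1 < n ∧ P k} : Finset (Fin n)) ↔ ∀ k ∈ A, P k := by
      simp only [subset_iff, mem_filter, mem_univ, true_and]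
      exact forall₂_congr fun k hk => and_iff_right (hA k hk)
    have hS : #{π | A ⊆ successions π} = (n - #A)! :=
      (congrArg card (filter_congr fun _ _ => hsub _)).trans
        (card_perm_apply_cyclicSucc_eq_succ A hA)
    have hT : #{π | A ⊆ fixedPointsBelowLast π} = (n - #A)! :=
      (congrArg card (filter_congr fun _ _ => hsub _)).trans
        (by convert card_perm_fixing A; simp)
    rw [hS, hT]
  · push Not at hA
    obtain ⟨k, hk, hkn⟩ := hA
    have hempty (U : Perm (Fin n) → Finset (Fin n)) (hU : ∀ π, ∀ j ∈ U π, (j : ℕ) + 1 < n) :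
        #{π | A ⊆ U π} = 0 :=
      card_eq_zero.2 (filter_eq_empty_iff.2 fun π _ h => (hU π k (h hk)).not_ge hkn)
    rw [hempty successions fun _ _ hj => (mem_filter.1 hj).2.1,
      hempty fixedPointsBelowLast fun _ _ hj => (mem_filter.1 hj).2.1]

end Successions

/-- For a uniformly random permutation `Π` of `[n]`, the random set
`S = {k ∈ [n-1] : Π(k+1) = Π(k)+1}` has the same distribution as the random set
`T = {k ∈ [n-1] : Π(k) = k}`: equivalently, for every subset `A ⊆ [n-1]`, the number of
permutations `π` with `S(π) = A` equals the number with `T(π) = A`.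
(Here `Fin n` represents `[n] = {1,…,n}`, `0`-indexed, so `[n-1]` is the set of
`k : Fin n` with `(k : ℕ) + 1 < n`, and conditions like `π(k+1) = π(k)+1` are on
genuine natural-number values, no reduction mod `n`.) -/
theorem stmt0 (n : ℕ) (A : Finset (Fin n)) :
    (Finset.univ.filter (fun π : Equiv.Perm (Fin n) =>
      Finset.univ.filter (fun k : Fin n =>
        (k : ℕ) + 1 < n ∧ ((π (cyclicSucc k) : ℕ) = (π k : ℕ) + 1)) = A)).card
    =
    (Finset.univ.filter (fun π : Equiv.Perm (Fin n) =>
      Finset.univ.filter (fun k : Fin n =>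
        (k : ℕ) + 1 < n ∧ π k = k) = A)).card :=
  eq_of_forall_sum_superset_eq (f := fun B => #{π | successions π = B})
    (g := fun B => #{π | fixedPointsBelowLast π = B})
    (fun A => (card_filter_comp_eq_sum successions (A ⊆ ·)).symm.trans
      ((card_subset_successions_eq_card_subset_fixedPointsBelowLast A).trans (card_filter_comp_eq_sum _ _))) A
end

section
/- For a uniformly random permutation Π of [n] and 0 ≤ m ≤ n-1, the probability that exactly m elements k ∈ [n-1] satisfy Π(k+1) = Π(k)+1 equals ((1/m!) · Σ_{k=0}^{n-m} (-1)^k/k!) · (n-m)/n + ((1/(m+1)!) · Σ_{k=0}^{n-m-1} (-1)^k/k!) · (m+1)/n. -/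
/-!
Call `k` a succession of `π` when `π (k+1) = π k + 1`. If `k` is the largest element of a set `T`
of successions of `π`, deleting position `k+1` and its value `π k + 1` leaves a permutation of
`[n-1]` whose successions below `k` are those of `π`, and every permutation of `[n-1]` arises from
exactly one such `π`. Hence `(n - #T)!` permutations have all of `T` among their successions.
Inclusion–exclusion over the positions outside a fixed `m`-set `B` then counts
`C(n-1, m) · ∑ᵢ (-1)^i C(r, i) (r+1-i)!` permutations with exactly `m` successions (`r = n-1-m`),
and the alternating sum is `r! ((r+1) e_{r+1} + e_r)` with `e_j = ∑_{k ≤ j} (-1)^k / k!`.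
-/

open Finset Equiv
open scoped Nat

lemma Fin.val_succAbove_eq_val_succAbove_add_one_iff {n : ℕ} {v : Fin (n + 1)} {x y : Fin n}
    (hx : (x : ℕ) + 1 ≠ v) : (v.succAbove y : ℕ) = v.succAbove x + 1 ↔ (y : ℕ) = x + 1 := by
  unfold Fin.succAbove
  split_ifs <;> simp only [Fin.lt_def, Fin.val_castSucc, Fin.val_succ] at * <;> omega

theorem Finset.card_filter_eq_eq_sum_powerset {α ι : Type*} [Fintype α] [DecidableEq α]
    [DecidableEq ι] {U B : Finset ι} {S : α → Finset ι} (hS : ∀ a, S a ⊆ U) :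
    (#{a | S a = B} : ℤ) = ∑ t ∈ (U \ B).powerset, (-1 : ℤ) ^ #t * #{a | t ∪ B ⊆ S a} := by
  let atLeast (i : ι) : Finset α := {a | i ∈ S a}
  have h := inclusion_exclusion_sum_inf_compl (U \ B) atLeast
    (fun a => if B ⊆ S a then (1 : ℤ) else 0)
  simp only [sum_boole, zsmul_eq_mul, Int.cast_pow, Int.cast_neg, Int.cast_one] at h
  have hexact : ({a | S a = B} : Finset α) =
      ((U \ B).inf fun i => (atLeast i)ᶜ).filter (fun a => B ⊆ S a) := by
    ext a
    simp only [atLeast, mem_filter, mem_univ, true_and, mem_inf, mem_compl, mem_sdiff]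
    constructor
    · rintro rfl
      exact ⟨fun i hi => hi.2, subset_rfl⟩
    · rintro ⟨hU, hBa⟩
      exact subset_antisymm (fun i hi => by_contra fun hiB => hU i ⟨hS a hi, hiB⟩ hi) hBa
  have hatLeast (t : Finset ι) : ({a | t ∪ B ⊆ S a} : Finset α) =
      (t.inf atLeast).filter (fun a => B ⊆ S a) := by
    ext a
    simp [atLeast, mem_inf, subset_iff, or_imp, forall_and]
  simp only [hexact, h, hatLeast]

lemma sum_neg_one_pow_mul_sub_div_factorial (r : ℕ) :
    ∑ i ∈ range (r + 1), (-1 : ℚ) ^ i * (r + 1 - i) / i ! =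
      (r + 1) * ∑ k ∈ range (r + 2), (-1 : ℚ) ^ k / k ! +
        ∑ k ∈ range (r + 1), (-1 : ℚ) ^ k / k ! := by
  induction r with
  | zero => norm_num [sum_range_succ]
  | succ r ih =>
    have step : ∑ i ∈ range (r + 2), (-1 : ℚ) ^ i * ((r + 1 : ℕ) + 1 - i) / i ! =
        ∑ i ∈ range (r + 1), (-1 : ℚ) ^ i * (r + 1 - i) / i ! +
          ∑ k ∈ range (r + 2), (-1 : ℚ) ^ k / k ! := by
      calc _ = ∑ i ∈ range (r + 2), ((-1 : ℚ) ^ i * (r + 1 - i) / i ! + (-1 : ℚ) ^ i / i !) :=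
            sum_congr rfl fun i _ => by push_cast; ring
        _ = _ := by rw [sum_add_distrib, sum_range_succ _ (r + 1)]; simp
    rw [step, ih, sum_range_succ _ (r + 2), sum_range_succ _ (r + 1),
      show (r + 2)! = (r + 2) * (r + 1)! from Nat.factorial_succ (r + 1), pow_succ _ (r + 1)]
    push_cast
    field_simp
    ring

lemma sum_neg_one_pow_mul_choose_mul_factorial (r : ℕ) :
    ∑ i ∈ range (r + 1), (-1 : ℚ) ^ i * r.choose i * (r + 1 - i)! =
      r ! * ((r + 1) * ∑ k ∈ range (r + 2), (-1 : ℚ) ^ k / k ! +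
        ∑ k ∈ range (r + 1), (-1 : ℚ) ^ k / k !) := by
  rw [← sum_neg_one_pow_mul_sub_div_factorial, mul_sum]
  refine sum_congr rfl fun i hi => ?_
  have hi : i ≤ r := Nat.lt_succ_iff.mp (mem_range.mp hi)
  rw [show r + 1 - i = (r - i) + 1 by omega, Nat.factorial_succ,
    ← Nat.choose_mul_factorial_mul_factorial hi]
  push_cast [Nat.cast_sub hi]
  field_simp
  ring

namespace Equiv.Perm

variable {n M : ℕ}

def insertAt (i v : Fin (n + 1)) (σ : Perm (Fin n)) : Perm (Fin (n + 1)) :=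
  (finSuccEquiv' i).trans (σ.optionCongr.trans (finSuccEquiv' v).symm)

@[simp] lemma insertAt_apply_self (i v : Fin (n + 1)) (σ : Perm (Fin n)) :
    insertAt i v σ i = v := by
  simp [insertAt]

@[simp] lemma insertAt_apply_succAbove (i v : Fin (n + 1)) (σ : Perm (Fin n)) (j : Fin n) :
    insertAt i v σ (i.succAbove j) = v.succAbove (σ j) := by
  simp [insertAt]

lemma exists_insertAt_eq (π : Perm (Fin (n + 1))) (i : Fin (n + 1)) :
    ∃ σ, insertAt i (π i) σ = π := by
  set e := (finSuccEquiv' i).symm.trans (π.trans (finSuccEquiv' (π i)))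
  refine ⟨removeNone e, Equiv.ext fun x => ?_⟩
  rcases Fin.eq_self_or_eq_succAbove i x with rfl | ⟨j, rfl⟩
  · simp
  · obtain ⟨z, hz⟩ := Fin.exists_succAbove_eq (π.injective.ne (Fin.succAbove_ne i j))
    have hez : e (some j) = some z := by simp [e, ← hz]
    have h := removeNone_some e ⟨z, hez⟩
    rw [hez, Option.some_inj] at h
    simp [h, hz]

lemma insertAt_inj {i v w : Fin (n + 1)} {σ τ : Perm (Fin n)} :
    insertAt i v σ = insertAt i w τ ↔ v = w ∧ σ = τ := by
  refine ⟨fun h => ?_, fun ⟨hvw, hστ⟩ => hvw ▸ hστ ▸ rfl⟩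
  obtain rfl : v = w := by simpa using congr($h i)
  exact ⟨rfl, Equiv.ext fun j => by simpa using congr($h (i.succAbove j))⟩

def IsSuccessionAt (π : Perm (Fin n)) (k : ℕ) : Prop :=
  ∃ h : k + 1 < n, (π ⟨k + 1, h⟩ : ℕ) = π ⟨k, by omega⟩ + 1

instance (π : Perm (Fin n)) : DecidablePred π.IsSuccessionAt := by
  unfold IsSuccessionAt; infer_instance

def successions (π : Perm (Fin n)) : Finset ℕ := {k ∈ range n | π.IsSuccessionAt k}

@[simp] lemma mem_successions {π : Perm (Fin n)} {k : ℕ} :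
    k ∈ π.successions ↔ π.IsSuccessionAt k := by
  simp only [successions, mem_filter, mem_range, and_iff_right_iff_imp]
  rintro ⟨h, -⟩
  omega

lemma successions_subset_range (π : Perm (Fin n)) : π.successions ⊆ range (n - 1) := by
  intro k hk
  obtain ⟨h, -⟩ := mem_successions.mp hk
  simp only [mem_range]
  omega

lemma card_filter_cyclicSucc_eq_card_successions (π : Perm (Fin n)) :
    #{k : Fin n | (k : ℕ) + 1 < n ∧ (π (cyclicSucc k) : ℕ) = π k + 1} = #π.successions := by
  rw [← card_map Fin.valEmbedding]
  congr 1
  ext k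
  simp only [mem_map, mem_filter, mem_univ, true_and, Fin.valEmbedding_apply, mem_successions,
    IsSuccessionAt]
  constructor
  · rintro ⟨j, ⟨hj, hπ⟩, rfl⟩
    exact ⟨hj, by simpa [cyclicSucc, Nat.mod_eq_of_lt hj] using hπ⟩
  · rintro ⟨hk, hπ⟩
    exact ⟨⟨k, by omega⟩, ⟨hk, by simpa [cyclicSucc, Nat.mod_eq_of_lt hk] using hπ⟩, rfl⟩

lemma insertAt_succ_apply_castSucc {a j : Fin (M + 1)} (v : Fin (M + 2)) (σ : Perm (Fin (M + 1)))
    (hj : j ≤ a) : insertAt a.succ v σ j.castSucc = v.succAbove (σ j) := by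
  rw [← Fin.succAbove_of_castSucc_lt _ _ (Fin.castSucc_lt_succ_iff.mpr hj),
    insertAt_apply_succAbove]

lemma isSuccessionAt_insertAt_iff (a : Fin (M + 1)) (σ : Perm (Fin (M + 1))) {k : ℕ}
    (hk : k < a) : (insertAt a.succ (σ a).succ σ).IsSuccessionAt k ↔ σ.IsSuccessionAt k := by
  have hk1 : k + 1 < M + 1 := by omega
  have hne : (σ ⟨k, by omega⟩ : ℕ) + 1 ≠ (σ a).succ := by
    rw [Fin.val_succ, Ne, add_left_inj, Fin.val_eq_val, σ.injective.eq_iff, Fin.ext_iff]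
    exact hk.ne
  have h := Fin.val_succAbove_eq_val_succAbove_add_one_iff (y := σ ⟨k + 1, hk1⟩) hne
  rw [← insertAt_succ_apply_castSucc (j := ⟨k + 1, hk1⟩) _ σ (Fin.le_def.mpr hk),
    ← insertAt_succ_apply_castSucc _ σ (Fin.le_def.mpr hk.le)] at h
  exact ⟨fun ⟨_, h'⟩ => ⟨hk1, h.mp h'⟩, fun ⟨_, h'⟩ => ⟨by omega, h.mpr h'⟩⟩

lemma isSuccessionAt_iff_exists_insertAt (π : Perm (Fin (M + 2))) (a : Fin (M + 1)) :
    π.IsSuccessionAt a ↔ ∃ σ, insertAt a.succ (σ a).succ σ = π := by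
  constructor
  · rintro ⟨_, hπ⟩
    obtain ⟨σ, hσ⟩ := exists_insertAt_eq π a.succ
    refine ⟨σ, ?_⟩
    have h : (π a.succ : ℕ) = (π a.succ).succAbove (σ a) + 1 := by
      rw [← insertAt_succ_apply_castSucc _ σ le_rfl, hσ]
      exact hπ
    have hv : π a.succ = (σ a).succ := by
      revert h
      unfold Fin.succAbove
      split_ifs <;> simp only [Fin.lt_def, Fin.val_castSucc, Fin.val_succ, Fin.ext_iff] at * <;>
        omega
    rwa [← hv]
  · rintro ⟨σ, rfl⟩
    refine ⟨by omega, ?_⟩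
    have h := insertAt_succ_apply_castSucc (σ a).succ σ (le_refl a)
    rw [Fin.succAbove_of_castSucc_lt _ _ Fin.castSucc_lt_succ] at h
    change ((insertAt a.succ (σ a).succ σ) a.succ : ℕ) =
      (insertAt a.succ (σ a).succ σ a.castSucc) + 1
    rw [h, insertAt_apply_self]
    rfl

lemma card_filter_insert_subset_successions (a : Fin (M + 1)) (s : Finset ℕ)
    (hs : ∀ k ∈ s, k < a) :
    #{π : Perm (Fin (M + 2)) | insert (a : ℕ) s ⊆ π.successions} =
      #{σ : Perm (Fin (M + 1)) | s ⊆ σ.successions} := by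
  have himage : ({π : Perm (Fin (M + 2)) | insert (a : ℕ) s ⊆ π.successions} : Finset _) =
      Finset.image (fun σ => insertAt a.succ (σ a).succ σ) {σ | s ⊆ σ.successions} := by
    ext π
    simp only [subset_iff, forall_mem_insert, mem_successions, mem_filter, mem_univ, true_and,
      mem_image, isSuccessionAt_iff_exists_insertAt]
    constructor
    · rintro ⟨⟨σ, rfl⟩, hπ⟩
      exact ⟨σ, fun k hk => (isSuccessionAt_insertAt_iff a σ (hs k hk)).mp (hπ k hk), rfl⟩
    · rintro ⟨σ, hσ, rfl⟩
      exact ⟨⟨σ, rfl⟩, fun k hk => (isSuccessionAt_insertAt_iff a σ (hs k hk)).mpr (hσ hk)⟩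
  rw [himage, card_image_of_injective]
  exact fun σ τ h => (insertAt_inj.mp h).2

theorem card_filter_subset_successions (T : Finset ℕ) (hT : T ⊆ range (n - 1)) :
    #{π : Perm (Fin n) | T ⊆ π.successions} = (n - #T)! := by
  induction T using Finset.induction_on_max generalizing n with
  | empty => simp [Fintype.card_perm]
  | insert a s hlt ih =>
    have ha : a < n - 1 := mem_range.mp (hT (mem_insert_self a s))
    obtain ⟨M, rfl⟩ : ∃ M, n = M + 2 := ⟨n - 2, by omega⟩
    have hs : s ⊆ range (M + 1 - 1) := fun k hk => mem_range.mpr (by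
      have := hlt k hk; omega)
    rw [card_filter_insert_subset_successions ⟨a, by omega⟩ s hlt, ih hs,
      card_insert_of_notMem (fun h => (hlt a h).false)]
    congr 1
    omega

theorem card_filter_card_successions_eq (m r : ℕ) :
    (#{π : Perm (Fin (m + r + 1)) | #π.successions = m} : ℤ) =
      (m + r).choose m * ∑ i ∈ range (r + 1), (-1 : ℤ) ^ i * r.choose i * (r + 1 - i)! := by
  have hU (π : Perm (Fin (m + r + 1))) : π.successions ⊆ range (m + r) :=
    π.successions_subset_range
  have hfiber (B : Finset ℕ) (hB : B ∈ powersetCard m (range (m + r))) :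
      (#{π ∈ {π : Perm (Fin (m + r + 1)) | #π.successions = m} | π.successions = B} : ℤ) =
        ∑ i ∈ range (r + 1), (-1 : ℤ) ^ i * r.choose i * (r + 1 - i)! := by
    obtain ⟨hBU, hBm⟩ := mem_powersetCard.mp hB
    rw [filter_filter, filter_congr fun π _ => and_iff_right_of_imp fun h : π.successions = B =>
      h ▸ hBm, card_filter_eq_eq_sum_powerset hU]
    have hsd : #(range (m + r) \ B) = r := by
      rw [card_sdiff_of_subset hBU, card_range, hBm, Nat.add_sub_cancel_left]
    calc _ = ∑ t ∈ (range (m + r) \ B).powerset, (fun j => (-1 : ℤ) ^ j * (r + 1 - j)!) #t := by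
          refine sum_congr rfl fun t ht => ?_
          have htU := mem_powerset.mp ht
          have htB : _root_.Disjoint t B := disjoint_of_subset_left htU sdiff_disjoint
          rw [card_filter_subset_successions (t ∪ B) (union_subset (htU.trans sdiff_subset) hBU),
            card_union_of_disjoint htB, hBm, show m + r + 1 - (#t + m) = r + 1 - #t by omega]
      _ = _ := by
          rw [sum_powerset_apply_card (fun j => (-1 : ℤ) ^ j * ((r + 1 - j)! : ℤ)), hsd]
          refine sum_congr rfl fun i _ => ?_
          rw [nsmul_eq_mul]
          ring
  rw [card_eq_sum_card_fiberwise (t := powersetCard m (range (m + r))) (f := successions)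
    fun π hπ => mem_powersetCard.mpr ⟨hU π, (mem_filter.mp hπ).2⟩]
  push_cast
  rw [sum_congr rfl hfiber, sum_const, card_powersetCard, card_range, nsmul_eq_mul]

end Equiv.Perm

/-- For a uniformly random permutation `Π` of `[n]` and `0 ≤ m ≤ n-1`, the probability
that exactly `m` elements `k ∈ [n-1]` satisfy `Π(k+1) = Π(k)+1` equals
`((1/m!)·Σ_{k=0}^{n-m} (-1)^k/k!)·(n-m)/n + ((1/(m+1)!)·Σ_{k=0}^{n-m-1} (-1)^k/k!)·(m+1)/n`. -/
theorem stmt4 (n m : ℕ) (hn : 1 ≤ n) (hm : m ≤ n - 1) :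
    ((Finset.univ.filter (fun π : Equiv.Perm (Fin n) =>
        (Finset.univ.filter (fun k : Fin n =>
          (k : ℕ) + 1 < n ∧ ((π (cyclicSucc k) : ℕ) = (π k : ℕ) + 1))).card = m)).card : ℚ)
      / (Nat.factorial n : ℚ)
    =
    ((1 / (Nat.factorial m : ℚ)) * ∑ k ∈ Finset.range (n - m + 1), (-1 : ℚ) ^ k / (Nat.factorial k : ℚ))
        * (((n : ℚ) - m) / n)
      +
      ((1 / (Nat.factorial (m+1) : ℚ)) * ∑ k ∈ Finset.range (n - m), (-1 : ℚ) ^ k / (Nat.factorial k : ℚ))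
        * (((m : ℚ) + 1) / n) := by
  obtain ⟨r, rfl⟩ : ∃ r, n = m + r + 1 := ⟨n - 1 - m, by omega⟩
  simp_rw [Perm.card_filter_cyclicSucc_eq_card_successions]
  have hcount : (#{π : Perm (Fin (m + r + 1)) | #π.successions = m} : ℚ) =
      (m + r).choose m * ∑ i ∈ range (r + 1), (-1 : ℚ) ^ i * r.choose i * (r + 1 - i)! := by
    exact_mod_cast Perm.card_filter_card_successions_eq m r
  have hchoose := Nat.choose_mul_factorial_mul_factorial (Nat.le_add_right m r)
  rw [Nat.add_sub_cancel_left] at hchoose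
  have hchoose_ne : ((m + r).choose m : ℚ) ≠ 0 := by
    exact_mod_cast (Nat.choose_pos (Nat.le_add_right m r)).ne'
  rw [hcount, sum_neg_one_pow_mul_choose_mul_factorial, show m + r + 1 - m + 1 = r + 2 by omega,
    show m + r + 1 - m = r + 1 by omega, Nat.factorial_succ (m + r), Nat.factorial_succ m,
    ← hchoose]
  push_cast
  field_simp
  ring
end

section
/- Let 1 ≤ h < n, let ρ ∈ S_n be the permutation i ↦ i + h mod n, and let π ↦ π̂ be the fundamental bijection (write the cycle decomposition of π with each cycle led by its least element and cycles in decreasing order of leaders, then erase parentheses to get the one-line word of π̂). Then for every π ∈ S_n, {k ∈ [n-h] : (ρπ)̂^{-1}(k+h) = (ρπ)̂^{-1}(k) + 1} = {k ∈ [n-h] : π(k) = k}. -/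
/-!
Write `σ = ρπ`, so that `σ k = π k + h`. The Foata word of `σ` is the concatenation of the
blocks `m, σ m, σ² m, …` of the cycles of `σ`, listed by decreasing leaders. Two consecutive
entries `a b` therefore satisfy `b = σ a` inside a block, and `b < a` across two blocks, since
`b` is a leader smaller than the leader of the block of `a`, which is at most `a`. Conversely,
if `x < σ x` then `σ x` is not the leader of its cycle, so `x` is not the last entry of its
block and `σ x` comes right after `x`. For `k + h < n` we have `k < k + h`, hence `k + h`
comes right after `k` exactly when `σ k = k + h`, that is, when `π k = k`.
-/

/-- Foata's fundamental bijection, as a word: write the cycle decomposition of `π` with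
each cycle led by its least element and the cycles listed in decreasing order of their
leaders, then erase parentheses.  The resulting list is the one-line notation of `π̂`,
i.e. `π̂(j)` is the `j`-th entry of the word (0-indexed). -/
def foataWord (n : ℕ) (π : Equiv.Perm (Fin n)) : List (Fin n) :=
  (((Finset.univ.filter (fun x : Fin n => ∀ i, i < n → x ≤ (π ^ i) x)).sort (· ≤ ·)).reverse).flatMap
    (fun m => (((List.range n).map (fun i => (π ^ i) m)).reverse.dedup).reverse)

open Function

theorem List.reverse_dedup_reverse_append_of_subset {α : Type*} [DecidableEq α] {A B : List α}
    (hA : A.Nodup) (hB : B ⊆ A) : ((A ++ B).reverse.dedup).reverse = A := by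
  rw [List.reverse_append, List.dedup_append, (List.nodup_reverse.2 hA).dedup,
    List.Subset.union_eq_right (fun x hx => List.mem_reverse.2 (hB (List.mem_reverse.1 hx))),
    List.reverse_reverse]

theorem List.pair_getElem_infix {α : Type*} (l : List α) (i : ℕ) (hi : i + 1 < l.length) :
    [l[i], l[i + 1]] <:+: l :=
  List.isChain_iff_getElem.1 (List.isChain_isInfix l) i hi

theorem List.Nodup.idxOf_eq_idxOf_add_one_iff {α : Type*} [DecidableEq α] {l : List α}
    (hl : l.Nodup) {x y : α} (hy : y ∈ l) : l.idxOf y = l.idxOf x + 1 ↔ [x, y] <:+: l := by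
  constructor
  · intro hxy
    have hlt : l.idxOf x + 1 < l.length := hxy ▸ List.idxOf_lt_length_iff.2 hy
    have hx : l[l.idxOf x] = x := List.getElem_idxOf (by omega)
    have hy' : l[l.idxOf x + 1] = y := by
      simp only [← hxy]
      exact List.getElem_idxOf _
    simpa [hx, hy'] using l.pair_getElem_infix _ hlt
  · rintro ⟨s, t, rfl⟩
    have hs : x ∉ s ∧ y ∉ s ∧ x ≠ y := by
      simp only [List.append_assoc, List.cons_append, List.nil_append, List.nodup_append,
        List.nodup_cons, List.mem_cons] at hl
      grind
    simp [List.idxOf_append_of_notMem, hs.1, hs.2.1, List.idxOf_cons_ne _ hs.2.2]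

section Iterate

variable {α : Type*} {f : α → α} {x : α}

theorem Function.nodup_iterate_minimalPeriod : (List.iterate f x (minimalPeriod f x)).Nodup := by
  have := nodup_periodicOrbit (f := f) (x := x)
  rwa [periodicOrbit_def, Cycle.nodup_coe_iff, List.range_map_iterate] at this

theorem Function.mem_iterate_minimalPeriod_iff (hx : x ∈ periodicPts f) {y : α} :
    y ∈ List.iterate f x (minimalPeriod f x) ↔ ∃ i, f^[i] x = y := by
  rw [← mem_periodicOrbit_iff hx, periodicOrbit_def, Cycle.mem_coe_iff, List.range_map_iterate]

theorem Function.reverse_dedup_reverse_iterate [DecidableEq α] (hx : x ∈ periodicPts f) {N : ℕ}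
    (hN : minimalPeriod f x ≤ N) :
    (List.iterate f x N).reverse.dedup.reverse = List.iterate f x (minimalPeriod f x) := by
  obtain ⟨k, rfl⟩ := Nat.exists_eq_add_of_le hN
  rw [List.iterate_add, iterate_minimalPeriod]
  refine List.reverse_dedup_reverse_append_of_subset nodup_iterate_minimalPeriod fun y hy => ?_
  obtain ⟨j, -, rfl⟩ := List.mem_iterate.1 hy
  exact (mem_iterate_minimalPeriod_iff hx).2 ⟨j, rfl⟩

end Iterate

namespace Foata

variable {n : ℕ} (σ : Equiv.Perm (Fin n))

def IsLeader (m : Fin n) : Prop := ∀ i < n, m ≤ (σ ^ i) m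

def leaders : List (Fin n) :=
  ((Finset.univ.filter fun x : Fin n => ∀ i, i < n → x ≤ (σ ^ i) x).sort (· ≤ ·)).reverse

def block (m : Fin n) : List (Fin n) :=
  (((List.range n).map (fun i => (σ ^ i) m)).reverse.dedup).reverse

theorem foataWord_eq_flatMap : foataWord n σ = (leaders σ).flatMap (block σ) := rfl

theorem mem_leaders {m : Fin n} : m ∈ leaders σ ↔ IsLeader σ m := by
  simp [leaders, IsLeader]

theorem pairwise_gt_leaders : (leaders σ).Pairwise (· > ·) :=
  List.pairwise_reverse.2 (Finset.sortedLT_sort _).pairwise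

theorem minimalPeriod_le (m : Fin n) : minimalPeriod σ m ≤ n := by
  simpa using minimalPeriod_le_card (f := σ) (x := m)

theorem block_eq_iterate (m : Fin n) : block σ m = List.iterate σ m (minimalPeriod σ m) := by
  have hrange : (List.range n).map (fun i => (σ ^ i) m) = List.iterate σ m n := by
    simp [Equiv.Perm.coe_pow]
  rw [block, hrange]
  exact reverse_dedup_reverse_iterate (σ.injective.mem_periodicPts m) (minimalPeriod_le σ m)

theorem head?_block (m : Fin n) : (block σ m).head? = some m := by
  obtain ⟨d, hd⟩ := Nat.exists_eq_add_one_of_ne_zero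
    (minimalPeriod_pos_of_mem_periodicPts (σ.injective.mem_periodicPts m)).ne'
  rw [block_eq_iterate, hd, List.iterate, List.head?_cons]

theorem mem_block {m x : Fin n} : x ∈ block σ m ↔ σ.SameCycle m x := by
  rw [block_eq_iterate, mem_iterate_minimalPeriod_iff (σ.injective.mem_periodicPts m)]
  constructor
  · rintro ⟨i, rfl⟩
    exact ⟨i, by simp [← Equiv.Perm.coe_pow]⟩
  · intro h
    obtain ⟨i, rfl⟩ := h.exists_nat_pow_eq
    exact ⟨i, by rw [Equiv.Perm.coe_pow]⟩

theorem IsLeader.le_of_sameCycle {m x : Fin n} (hm : IsLeader σ m) (h : σ.SameCycle m x) :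
    m ≤ x := by
  obtain ⟨j, hj, rfl⟩ := List.mem_iterate.1 (block_eq_iterate σ m ▸ (mem_block σ).2 h)
  rw [← Equiv.Perm.coe_pow]
  exact hm j (hj.trans_le (minimalPeriod_le σ m))

theorem exists_isLeader_sameCycle (x : Fin n) : ∃ m, IsLeader σ m ∧ σ.SameCycle m x := by
  classical
  let cycle := Finset.univ.filter (σ.SameCycle x)
  have hx : cycle.Nonempty := ⟨x, Finset.mem_filter.2 ⟨Finset.mem_univ _, .refl _ _⟩⟩
  have hmin : σ.SameCycle x (cycle.min' hx) := (Finset.mem_filter.1 (cycle.min'_mem hx)).2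
  refine ⟨cycle.min' hx, fun i _ => cycle.min'_le _ ?_, hmin.symm⟩
  exact Finset.mem_filter.2 ⟨Finset.mem_univ _, σ.sameCycle_pow_right.2 hmin⟩

theorem mem_foataWord (x : Fin n) : x ∈ foataWord n σ := by
  obtain ⟨m, hm, hmx⟩ := exists_isLeader_sameCycle σ x
  exact List.mem_flatMap.2 ⟨m, (mem_leaders σ).2 hm, (mem_block σ).2 hmx⟩

theorem nodup_foataWord : (foataWord n σ).Nodup := by
  rw [foataWord_eq_flatMap]
  refine List.nodup_flatMap.2 ⟨fun m _ => ?_, (pairwise_gt_leaders σ).imp_of_mem ?_⟩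
  · exact block_eq_iterate σ m ▸ nodup_iterate_minimalPeriod
  · intro a b ha _ hab x hxa hxb
    have hab' := ((mem_block σ).1 hxa).trans ((mem_block σ).1 hxb).symm
    exact hab.not_ge (((mem_leaders σ).1 ha).le_of_sameCycle σ hab')

theorem isChain_foataWord : (foataWord n σ).IsChain (fun a b => b = σ a ∨ b < a) := by
  have hne : [] ∉ (leaders σ).map (block σ) := by
    simp only [List.mem_map, not_exists, not_and]
    intro m _ h
    simpa [h] using head?_block σ m
  rw [foataWord_eq_flatMap, List.flatMap, List.isChain_flatten hne]
  refine ⟨?_, (List.isChain_map _).2 ((pairwise_gt_leaders σ).imp_of_mem ?_).isChain⟩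
  · simp only [List.forall_mem_map, block_eq_iterate, List.isChain_iff_getElem]
    intro m _ i hi
    simp [iterate_succ_apply']
  · intro a b ha _ hab x hx y hy
    rw [head?_block, Option.mem_some_iff] at hy
    have hax : a ≤ x :=
      ((mem_leaders σ).1 ha).le_of_sameCycle σ ((mem_block σ).1 (List.mem_of_getLast? hx))
    exact Or.inr (hy ▸ hab.trans_le hax)

theorem eq_apply_of_infix_foataWord {x y : Fin n} (h : [x, y] <:+: foataWord n σ) (hxy : x < y) :
    y = σ x :=
  (List.isChain_pair.1 ((isChain_foataWord σ).infix h)).resolve_right hxy.not_gt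

theorem infix_foataWord_of_lt_apply {x : Fin n} (hx : x < σ x) :
    [x, σ x] <:+: foataWord n σ := by
  obtain ⟨m, hm, hmx⟩ := exists_isLeader_sameCycle σ x
  obtain ⟨j, hj, rfl⟩ := List.mem_iterate.1 (block_eq_iterate σ m ▸ (mem_block σ).2 hmx)
  have hj' : j + 1 < minimalPeriod σ m := by
    refine lt_of_le_of_ne hj fun hd => hx.not_ge ?_
    rw [← iterate_succ_apply' (f := σ), Nat.succ_eq_add_one, hd, iterate_minimalPeriod]
    exact hm.le_of_sameCycle σ hmx
  refine List.IsInfix.trans ?_ (List.infix_flatMap_of_mem ((mem_leaders σ).2 hm) (block σ))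
  rw [block_eq_iterate]
  have := (List.iterate σ m _).pair_getElem_infix j (by simpa)
  simpa only [List.getElem_iterate, iterate_succ_apply'] using this

end Foata

/-- Let `1 ≤ h < n`, let `ρ ∈ S_n` be `i ↦ i + h mod n`, and let `π ↦ π̂` be Foata's
fundamental bijection.  Then for every `π ∈ S_n`,
`{k ∈ [n-h] : (ρπ)̂⁻¹(k+h) = (ρπ)̂⁻¹(k) + 1} = {k ∈ [n-h] : π(k) = k}`.
Since `(ρπ)̂⁻¹(k)` is exactly the position of `k` in the word `foataWord n (ρ * π)`,
the condition `(ρπ)̂⁻¹(k+h) = (ρπ)̂⁻¹(k) + 1` is expressed via `List.indexOf`. -/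
theorem stmt6 (n h : ℕ) [NeZero n] (hh : 1 ≤ h) (hn : h < n) (π : Equiv.Perm (Fin n)) :
    {k : Fin n | (k : ℕ) + h < n ∧
        (foataWord n (Equiv.addRight (⟨h, hn⟩ : Fin n) * π)).idxOf (k + ⟨h, hn⟩)
          = (foataWord n (Equiv.addRight (⟨h, hn⟩ : Fin n) * π)).idxOf k + 1}
    = {k : Fin n | (k : ℕ) + h < n ∧ π k = k} := by
  set c : Fin n := ⟨h, hn⟩
  set σ := Equiv.addRight c * π
  ext k
  refine and_congr_right fun hk => ?_
  have hlt : k < k + c := by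
    rw [Fin.lt_def, Fin.val_add, Nat.mod_eq_of_lt hk]
    omega
  rw [(Foata.nodup_foataWord σ).idxOf_eq_idxOf_add_one_iff (Foata.mem_foataWord σ _)]
  constructor
  · intro hinf
    exact add_right_cancel (Foata.eq_apply_of_infix_foataWord σ hinf hlt).symm
  · intro hfix
    have hσk : σ k = k + c := by simp [σ, hfix]
    exact hσk ▸ Foata.infix_foataWord_of_lt_apply σ (hσk ▸ hlt)
end

section
/- The map π ↦ (ρπ)̂^{-1}, where ρ(i) = i+1 mod n and ̂ is Foata's fundamental bijection, is a bijection of S_n to itself that maps the set of permutations with fixed-point set (within [n-1]) equal to A onto the set of permutations σ with {k ∈ [n-1] : σ(k+1) = σ(k)+1} = A, for every A ⊆ [n-1]. -/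
/-- The inverse of the permutation whose one-line notation is `foataWord n σ`:
it sends `k` to the position of `k` in the word. -/
def foataHatInv (n : ℕ) [NeZero n] (σ : Equiv.Perm (Fin n)) : Fin n → Fin n :=
  fun k => (Fin.ofNat n ((foataWord n σ).idxOf k : ℕ) : Fin n)

/-! The Foata word of `σ` lists the cycles of `σ`, each starting at its minimum, in decreasing
order of minima. Two adjacent letters `x, y` of it are therefore either consecutive in a cycle
(`σ x = y`), or `x` closes a cycle (`σ x ≤ x`) and `y < x` opens the next one. Hence for `x < y`
the letter `y` comes right after `x` iff `σ x = y`; for `σ = ρπ` and `y = x + 1` this says that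
`π` fixes `x` iff `(ρπ)̂⁻¹(x+1) = (ρπ)̂⁻¹(x) + 1`. The word determines its cycles (the first one
is the longest prefix whose letters are at least the first letter), hence determines `σ`, and
injectivity gives bijectivity on the finite set `S_n`. -/

open Function

theorem List.getElem_mem_getLast? {α : Type*} {l : List α} {i : ℕ} (hi : i + 1 = l.length) :
    l[i] ∈ l.getLast? := by
  simp [List.getLast?_eq_getElem?, ← hi]

theorem List.eq_of_forall_idxOf_eq {α : Type*} [BEq α] [LawfulBEq α] {l l' : List α}
    (hl : l.Nodup) (hlen : l.length = l'.length) (h : ∀ x ∈ l, l.idxOf x = l'.idxOf x) :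
    l = l' := by
  refine List.ext_getElem hlen fun i hi hi' => ?_
  have hidx : l'.idxOf l[i] = i :=
    (h _ (List.getElem_mem hi)).symm.trans (hl.idxOf_getElem i hi)
  calc l[i] = l'[l'.idxOf l[i]] := (List.getElem_idxOf (hidx ▸ hi')).symm
    _ = l'[i] := by simp only [hidx]

theorem exists_eq_of_injective_of_forall_bijective {α : Type*} [Finite α]
    {Φ : Equiv.Perm α → α → α} (hΦ : ∀ π, Bijective (Φ π)) (hinj : Injective Φ) {f : α → α}
    (hf : Bijective f) : ∃ π, Φ π = f := by
  let Ψ : Equiv.Perm α → Equiv.Perm α := fun π => Equiv.ofBijective _ (hΦ π)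
  have hΨ : Surjective Ψ :=
    Finite.injective_iff_surjective.mp fun π τ h => hinj (congrArg (⇑) h)
  obtain ⟨π, hπ⟩ := hΨ (Equiv.ofBijective f hf)
  exact ⟨π, congrArg (⇑) hπ⟩

section CycleDecomposition

variable {α : Type*} [LinearOrder α]

/-- Foata's canonical form: cycles of `f`, each led by its minimum, with decreasing minima. -/
structure IsCycleDecomposition (f : α → α) (bs : List (List α)) : Prop where
  nil_notMem : [] ∉ bs
  isChain : ∀ b ∈ bs, b.IsChain (fun x y => f x = y)
  apply_getLast : ∀ b ∈ bs, ∀ x ∈ b.getLast?, f x ∈ b.head?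
  head_le : ∀ b ∈ bs, ∀ m ∈ b.head?, ∀ x ∈ b, m ≤ x
  isChain_head : bs.IsChain (fun b b' => ∀ m ∈ b.head?, ∀ m' ∈ b'.head?, m' < m)

namespace IsCycleDecomposition

variable {f g : α → α} {b : List α} {bs cs : List (List α)}

theorem of_cons (h : IsCycleDecomposition f (b :: bs)) : IsCycleDecomposition f bs where
  nil_notMem hnil := h.nil_notMem (List.mem_cons_of_mem _ hnil)
  isChain c hc := h.isChain c (List.mem_cons_of_mem _ hc)
  apply_getLast c hc := h.apply_getLast c (List.mem_cons_of_mem _ hc)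
  head_le c hc := h.head_le c (List.mem_cons_of_mem _ hc)
  isChain_head := h.isChain_head.tail

theorem apply_le_of_mem_getLast? (h : IsCycleDecomposition f bs) {b : List α} (hb : b ∈ bs)
    {x : α} (hx : x ∈ b.getLast?) : f x ≤ x :=
  h.head_le b hb _ (h.apply_getLast b hb x hx) x (List.mem_of_getLast? hx)

theorem lt_of_mem_head?_flatten (h : IsCycleDecomposition f (b :: bs)) {m y : α}
    (hm : m ∈ b.head?) (hy : y ∈ bs.flatten.head?) : y < m := by
  cases bs with
  | nil => simp at hy
  | cons c cs =>
    have hc : c ≠ [] := fun hc => h.nil_notMem (hc ▸ by simp)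
    rw [List.flatten_cons, List.head?_append_of_ne_nil _ hc] at hy
    exact (List.isChain_cons_cons.mp h.isChain_head).1 m hm y hy

theorem isChain_flatten (h : IsCycleDecomposition f bs) :
    bs.flatten.IsChain (fun x y => f x = y ∨ (f x ≤ x ∧ y < x)) := by
  rw [List.isChain_flatten h.nil_notMem]
  refine ⟨fun b hb => (h.isChain b hb).imp fun _ _ => Or.inl, ?_⟩
  refine h.isChain_head.imp_of_mem_imp fun b b' hb _ hlt x hx y hy => Or.inr ?_
  have hfx := h.apply_getLast b hb x hx
  have hfx_le := h.apply_le_of_mem_getLast? hb hx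
  exact ⟨hfx_le, (hlt _ hfx y hy).trans_le hfx_le⟩

theorem apply_le_of_mem_getLast?_flatten (h : IsCycleDecomposition f bs) {x : α}
    (hx : x ∈ bs.flatten.getLast?) : f x ≤ x := by
  induction bs with
  | nil => simp at hx
  | cons b bs ih =>
    rw [List.flatten_cons, List.getLast?_append] at hx
    cases hlast : bs.flatten.getLast? with
    | none => exact h.apply_le_of_mem_getLast? List.mem_cons_self (by simpa [hlast] using hx)
    | some z => exact ih h.of_cons (by simpa [hlast] using hx)

theorem append_eq_nil_of_flatten_eq {a r : List α} (hf : IsCycleDecomposition f (b :: bs))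
    (hg : IsCycleDecomposition g ((b ++ a) :: cs)) (hr : bs.flatten = a ++ r) : a = [] := by
  cases a with
  | nil => rfl
  | cons y a =>
    obtain ⟨m, hm⟩ := Option.isSome_iff_exists.mp
      (List.isSome_head?.mpr fun hb => hf.nil_notMem (hb ▸ List.mem_cons_self))
    have hym : y < m := hf.lt_of_mem_head?_flatten hm (by simp [hr])
    have hmy : m ≤ y := hg.head_le _ List.mem_cons_self m
      (by rwa [List.head?_append_of_ne_nil _ (List.ne_nil_of_mem (List.mem_of_mem_head? hm))])
      y (by simp)
    exact absurd hym hmy.not_gt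

theorem eq_of_flatten_eq (hf : IsCycleDecomposition f bs) (hg : IsCycleDecomposition g cs)
    (h : bs.flatten = cs.flatten) : bs = cs := by
  induction bs generalizing cs with
  | nil =>
    cases cs with
    | nil => rfl
    | cons c cs =>
      exact absurd (List.flatten_eq_nil_iff.mp h.symm c List.mem_cons_self ▸ List.mem_cons_self)
        hg.nil_notMem
  | cons b bs ih =>
    cases cs with
    | nil =>
      exact absurd (List.flatten_eq_nil_iff.mp h b List.mem_cons_self ▸ List.mem_cons_self)
        hf.nil_notMem
    | cons c cs =>
      rw [List.flatten_cons, List.flatten_cons, List.append_eq_append_iff] at h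
      obtain ⟨a, rfl, hr⟩ | ⟨a, rfl, hr⟩ := h
      · obtain rfl := append_eq_nil_of_flatten_eq hf hg hr
        rw [List.append_nil, ih hf.of_cons hg.of_cons hr]
      · obtain rfl := append_eq_nil_of_flatten_eq hg hf hr
        rw [List.append_nil, ih hf.of_cons hg.of_cons hr.symm]

theorem eqOn_flatten (hf : IsCycleDecomposition f bs) (hg : IsCycleDecomposition g bs) {x : α}
    (hx : x ∈ bs.flatten) : f x = g x := by
  obtain ⟨b, hb, hxb⟩ := List.mem_flatten.mp hx
  obtain ⟨i, hi, rfl⟩ := List.mem_iff_getElem.mp hxb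
  by_cases hi1 : i + 1 < b.length
  · exact (List.isChain_iff_getElem.mp (hf.isChain b hb) i hi1).trans
      (List.isChain_iff_getElem.mp (hg.isChain b hb) i hi1).symm
  · have hlast := List.getElem_mem_getLast? (l := b) (i := i) (by omega)
    exact Option.mem_unique (hf.apply_getLast b hb _ hlast) (hg.apply_getLast b hb _ hlast)

end IsCycleDecomposition

theorem idxOf_eq_idxOf_add_one_iff {f : α → α} {w : List α} (hw : w.Nodup)
    (hchain : w.IsChain (fun x y => f x = y ∨ (f x ≤ x ∧ y < x)))
    (hlast : ∀ x ∈ w.getLast?, f x ≤ x) {x y : α} (hx : x ∈ w) (hy : y ∈ w) (hxy : x < y) :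
    w.idxOf y = w.idxOf x + 1 ↔ f x = y := by
  have hi : w.idxOf x < w.length := List.idxOf_lt_length_iff.mpr hx
  have hwx : w[w.idxOf x] = x := List.getElem_idxOf hi
  have step (hi1 : w.idxOf x + 1 < w.length) :
      f x = w[w.idxOf x + 1] ∨ f x ≤ x ∧ w[w.idxOf x + 1] < x := by
    simpa only [hwx] using List.isChain_iff_getElem.mp hchain _ hi1
  constructor
  · intro hidx
    have hi1 : w.idxOf x + 1 < w.length := hidx ▸ List.idxOf_lt_length_iff.mpr hy
    have hwy : w[w.idxOf x + 1] = y := by simp only [← hidx]; exact List.getElem_idxOf _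
    rcases step hi1 with h | ⟨-, h⟩
    · exact h.trans hwy
    · exact absurd (hwy ▸ h) hxy.not_gt
  · rintro rfl
    by_cases hi1 : w.idxOf x + 1 < w.length
    · rcases step hi1 with h | ⟨h, -⟩
      · rw [h, hw.idxOf_getElem]
      · exact absurd h hxy.not_ge
    · have hlastx := List.getElem_mem_getLast? (l := w) (i := w.idxOf x) (by omega)
      rw [hwx] at hlastx
      exact absurd (hlast x hlastx) hxy.not_ge

end CycleDecomposition

section OrbitList

variable {α : Type*} {f : α → α} {m : α}

noncomputable def orbitList (f : α → α) (m : α) : List α :=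
  (List.range (minimalPeriod f m)).map (f^[·] m)

theorem coe_orbitList : (orbitList f m : Cycle α) = periodicOrbit f m := rfl

theorem mem_orbitList_iff (hm : m ∈ periodicPts f) {x : α} :
    x ∈ orbitList f m ↔ ∃ i, f^[i] m = x := by
  rw [← Cycle.mem_coe_iff, coe_orbitList, mem_periodicOrbit_iff hm]

theorem self_mem_orbitList (hm : m ∈ periodicPts f) : m ∈ orbitList f m :=
  (mem_orbitList_iff hm).mpr ⟨0, rfl⟩

theorem nodup_orbitList : (orbitList f m).Nodup :=
  Cycle.nodup_coe_iff.mp nodup_periodicOrbit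

theorem length_orbitList : (orbitList f m).length = minimalPeriod f m := by
  simp [orbitList]

theorem head?_orbitList (hm : m ∈ periodicPts f) : (orbitList f m).head? = some m := by
  simp [orbitList, List.head?_eq_getElem?, minimalPeriod_pos_of_mem_periodicPts hm]

theorem orbitList_ne_nil (hm : m ∈ periodicPts f) : orbitList f m ≠ [] :=
  fun h => by simpa [h] using head?_orbitList hm

theorem isChain_orbitList : (orbitList f m).IsChain (fun x y => f x = y) := by
  refine List.isChain_iff_getElem.mpr fun i hi => ?_
  simp [orbitList, ← iterate_succ_apply' f]

theorem apply_eq_of_mem_getLast?_orbitList (hm : m ∈ periodicPts f) {x : α}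
    (hx : x ∈ (orbitList f m).getLast?) : f x = m := by
  have hpos := minimalPeriod_pos_of_mem_periodicPts hm
  rw [List.getLast?_eq_getElem?, length_orbitList] at hx
  simp only [orbitList, List.getElem?_map, List.getElem?_range (Nat.sub_lt hpos one_pos),
    Option.map_some, Option.mem_def, Option.some.injEq] at hx
  rw [← hx, ← iterate_succ_apply' f, Nat.succ_eq_add_one, Nat.sub_one_add_one hpos.ne']
  exact isPeriodicPt_minimalPeriod f m

theorem mem_orbitList_iff_of_mem (hm : m ∈ periodicPts f) {x y : α} (hx : x ∈ orbitList f m) :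
    y ∈ orbitList f x ↔ y ∈ orbitList f m := by
  obtain ⟨i, rfl⟩ := (mem_orbitList_iff hm).mp hx
  rw [← Cycle.mem_coe_iff, coe_orbitList, periodicOrbit_apply_iterate_eq hm, ← coe_orbitList,
    Cycle.mem_coe_iff]

/-- `List.dedup` keeps last occurrences, so `reverse ∘ dedup ∘ reverse` keeps the first ones. -/
theorem reverse_dedup_reverse_map_range [DecidableEq α] (hm : m ∈ periodicPts f) {N : ℕ}
    (hN : minimalPeriod f m ≤ N) :
    ((List.range N).map (f^[·] m)).reverse.dedup.reverse = orbitList f m := by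
  obtain ⟨k, rfl⟩ := Nat.exists_eq_add_of_le hN
  rw [List.range_add, List.map_append, List.reverse_append, List.Subset.dedup_append_right]
  · exact (congrArg List.reverse (List.nodup_reverse.mpr nodup_orbitList).dedup).trans
      (List.reverse_reverse _)
  intro x hx
  obtain ⟨i, -, rfl⟩ := List.mem_map.mp (List.mem_reverse.mp hx)
  exact List.mem_reverse.mpr ((mem_orbitList_iff hm).mpr ⟨_, rfl⟩)

end OrbitList

section Foata

variable {n : ℕ} (σ : Equiv.Perm (Fin n))

def cycleMinima (n : ℕ) (σ : Equiv.Perm (Fin n)) : List (Fin n) :=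
  ((Finset.univ.filter (fun x : Fin n => ∀ i, i < n → x ≤ (σ ^ i) x)).sort (· ≤ ·)).reverse

theorem pairwise_cycleMinima : (cycleMinima n σ).Pairwise (· > ·) :=
  List.pairwise_reverse.mpr (Finset.sortedLT_sort _).pairwise

theorem mem_cycleMinima_iff {m : Fin n} :
    m ∈ cycleMinima n σ ↔ ∀ x ∈ orbitList σ m, m ≤ x := by
  simp only [cycleMinima, List.mem_reverse, Finset.mem_sort, Finset.mem_filter,
    Finset.mem_univ, true_and, Equiv.Perm.coe_pow]
  refine ⟨fun h x hx => ?_, fun h i _ =>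
    h _ ((mem_orbitList_iff (σ.injective.mem_periodicPts m)).mpr ⟨i, rfl⟩)⟩
  obtain ⟨i, hi, rfl⟩ := List.mem_map.mp hx
  exact h i ((List.mem_range.mp hi).trans_le (minimalPeriod_le_card.trans_eq (Fintype.card_fin n)))

theorem foataWord_eq_flatten :
    foataWord n σ = ((cycleMinima n σ).map (orbitList σ)).flatten := by
  rw [foataWord, List.flatMap_def]
  refine congrArg _ (List.map_congr_left fun m _ => ?_)
  simp only [Equiv.Perm.coe_pow]
  exact reverse_dedup_reverse_map_range (σ.injective.mem_periodicPts m)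
    (minimalPeriod_le_card.trans_eq (Fintype.card_fin n))

theorem isCycleDecomposition_foata :
    IsCycleDecomposition σ ((cycleMinima n σ).map (orbitList σ)) where
  nil_notMem h := by
    obtain ⟨m, -, hm⟩ := List.mem_map.mp h
    exact orbitList_ne_nil (σ.injective.mem_periodicPts m) hm
  isChain b hb := by
    obtain ⟨m, -, rfl⟩ := List.mem_map.mp hb
    exact isChain_orbitList
  apply_getLast b hb x hx := by
    obtain ⟨m, -, rfl⟩ := List.mem_map.mp hb
    rw [head?_orbitList (σ.injective.mem_periodicPts m),
      apply_eq_of_mem_getLast?_orbitList (σ.injective.mem_periodicPts m) hx]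
    rfl
  head_le b hb m' hm' := by
    obtain ⟨m, hm, rfl⟩ := List.mem_map.mp hb
    rw [head?_orbitList (σ.injective.mem_periodicPts m), Option.mem_some_iff] at hm'
    exact hm' ▸ (mem_cycleMinima_iff σ).mp hm
  isChain_head := by
    refine List.isChain_map_of_isChain _ (fun a b hab => ?_) (pairwise_cycleMinima σ).isChain
    simp_all [head?_orbitList (σ.injective.mem_periodicPts _)]

theorem mem_foataWord (k : Fin n) : k ∈ foataWord n σ := by
  have hper : ∀ x : Fin n, x ∈ periodicPts σ := σ.injective.mem_periodicPts
  have hne : (orbitList σ k).toFinset.Nonempty :=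
    ⟨k, List.mem_toFinset.mpr (self_mem_orbitList (hper k))⟩
  set m := (orbitList σ k).toFinset.min' hne
  have hmk : m ∈ orbitList σ k := List.mem_toFinset.mp (Finset.min'_mem _ hne)
  have horbit (x : Fin n) : x ∈ orbitList σ m ↔ x ∈ orbitList σ k :=
    mem_orbitList_iff_of_mem (hper k) hmk
  have hmin : m ∈ cycleMinima n σ := (mem_cycleMinima_iff σ).mpr fun x hx =>
    Finset.min'_le _ _ (List.mem_toFinset.mpr ((horbit x).mp hx))
  rw [foataWord_eq_flatten, List.mem_flatten]
  exact ⟨_, List.mem_map_of_mem hmin, (horbit k).mpr (self_mem_orbitList (hper k))⟩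

theorem nodup_foataWord : (foataWord n σ).Nodup := by
  have hper : ∀ x : Fin n, x ∈ periodicPts σ := σ.injective.mem_periodicPts
  rw [foataWord_eq_flatten, List.nodup_flatten, List.pairwise_map]
  refine ⟨fun b hb => ?_, (pairwise_cycleMinima σ).imp_of_mem fun ha hb hba x hxa hxb => ?_⟩
  · obtain ⟨m, -, rfl⟩ := List.mem_map.mp hb
    exact nodup_orbitList
  · have horbit (y : Fin n) : y ∈ orbitList σ _ ↔ y ∈ orbitList σ _ :=
      (mem_orbitList_iff_of_mem (hper _) hxa).symm.trans (mem_orbitList_iff_of_mem (hper _) hxb)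
    exact hba.not_ge
      ((mem_cycleMinima_iff σ).mp ha _ ((horbit _).mpr (self_mem_orbitList (hper _))))

theorem length_foataWord : (foataWord n σ).length = n := by
  rw [← List.toFinset_card_of_nodup (nodup_foataWord σ),
    Finset.eq_univ_of_forall fun k => List.mem_toFinset.mpr (mem_foataWord σ k),
    Finset.card_univ, Fintype.card_fin]

theorem foataWord_injective : Injective (foataWord n) := by
  intro σ τ h
  rw [foataWord_eq_flatten, foataWord_eq_flatten] at h
  have hblocks :=
    (isCycleDecomposition_foata σ).eq_of_flatten_eq (isCycleDecomposition_foata τ) h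
  refine Equiv.ext fun k => (isCycleDecomposition_foata σ).eqOn_flatten ?_ ?_
  · exact hblocks ▸ isCycleDecomposition_foata τ
  · rw [← foataWord_eq_flatten]
    exact mem_foataWord σ k

theorem idxOf_foataWord_eq_add_one_iff {x y : Fin n} (hxy : x < y) :
    (foataWord n σ).idxOf y = (foataWord n σ).idxOf x + 1 ↔ σ x = y := by
  have hdec := isCycleDecomposition_foata σ
  refine idxOf_eq_idxOf_add_one_iff (nodup_foataWord σ) ?_ ?_ (mem_foataWord σ x)
    (mem_foataWord σ y) hxy
  · rw [foataWord_eq_flatten]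
    exact hdec.isChain_flatten
  · rw [foataWord_eq_flatten]
    exact fun _ => hdec.apply_le_of_mem_getLast?_flatten

end Foata

section FoataHatInv

variable {n : ℕ} [NeZero n]

theorem cyclicSucc_eq_add_one (k : Fin n) : cyclicSucc k = k + 1 :=
  Fin.ext (by simp [cyclicSucc, Fin.val_add, Nat.add_mod])

theorem val_foataHatInv (σ : Equiv.Perm (Fin n)) (k : Fin n) :
    (foataHatInv n σ k : ℕ) = (foataWord n σ).idxOf k :=
  Nat.mod_eq_of_lt ((List.idxOf_lt_length_iff.mpr (mem_foataWord σ k)).trans_eq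
    (length_foataWord σ))

theorem bijective_foataHatInv (σ : Equiv.Perm (Fin n)) : Bijective (foataHatInv n σ) := by
  refine Finite.injective_iff_bijective.mp fun a b h => ?_
  have hidx := congrArg Fin.val h
  rw [val_foataHatInv, val_foataHatInv] at hidx
  exact (List.idxOf_inj (mem_foataWord σ a)).mp hidx

theorem foataHatInv_injective : Injective (foataHatInv n) := by
  refine fun σ τ h => foataWord_injective (List.eq_of_forall_idxOf_eq (nodup_foataWord σ)
    ((length_foataWord σ).trans (length_foataWord τ).symm) fun k _ => ?_)
  rw [← val_foataHatInv, ← val_foataHatInv, h]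

theorem val_foataHatInv_cyclicSucc_eq_add_one_iff (π : Equiv.Perm (Fin n)) {k : Fin n}
    (hk : (k : ℕ) + 1 < n) :
    (foataHatInv n (Equiv.addRight 1 * π) (cyclicSucc k) : ℕ)
        = foataHatInv n (Equiv.addRight 1 * π) k + 1 ↔ π k = k := by
  rw [val_foataHatInv, val_foataHatInv, cyclicSucc_eq_add_one,
    idxOf_foataWord_eq_add_one_iff _ (Fin.lt_add_one_of_succ_lt hk)]
  simp

end FoataHatInv

/-- The map `π ↦ (ρπ)̂⁻¹`, where `ρ(i) = i+1 mod n` and `̂` is Foata's fundamental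
bijection, is a bijection of `S_n` to itself that, for every `A ⊆ [n-1]`, maps the set of
permutations whose set of fixed points within `[n-1]` equals `A` onto the set of
permutations `σ` with `{k ∈ [n-1] : σ(k+1) = σ(k)+1} = A`. -/
theorem stmt7 (n : ℕ) [NeZero n] :
    (∀ π : Equiv.Perm (Fin n),
        Function.Bijective (foataHatInv n (Equiv.addRight (1 : Fin n) * π)))
    ∧ Function.Injective (fun π : Equiv.Perm (Fin n) =>
        foataHatInv n (Equiv.addRight (1 : Fin n) * π))
    ∧ (∀ f : Fin n → Fin n, Function.Bijective f →
        ∃ π : Equiv.Perm (Fin n), foataHatInv n (Equiv.addRight (1 : Fin n) * π) = f)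
    ∧ (∀ A : Set (Fin n), A ⊆ {k : Fin n | (k : ℕ) + 1 < n} →
        (fun π : Equiv.Perm (Fin n) => foataHatInv n (Equiv.addRight (1 : Fin n) * π)) ''
            {π : Equiv.Perm (Fin n) | {k : Fin n | (k : ℕ) + 1 < n ∧ π k = k} = A}
          = {f : Fin n → Fin n | Function.Bijective f ∧
              {k : Fin n | (k : ℕ) + 1 < n ∧ ((f (cyclicSucc k) : ℕ) = (f k : ℕ) + 1)} = A}) := by
  have hbij (π : Equiv.Perm (Fin n)) := bijective_foataHatInv (Equiv.addRight (1 : Fin n) * π)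
  have hinj : Injective fun π : Equiv.Perm (Fin n) =>
      foataHatInv n (Equiv.addRight (1 : Fin n) * π) :=
    foataHatInv_injective.comp (mul_right_injective _)
  have hsurj (f : Fin n → Fin n) (hf : Bijective f) :=
    exists_eq_of_injective_of_forall_bijective hbij hinj hf
  have hsucc (π : Equiv.Perm (Fin n)) :
      {k : Fin n | (k : ℕ) + 1 < n ∧ ((foataHatInv n (Equiv.addRight 1 * π) (cyclicSucc k) : ℕ)
          = foataHatInv n (Equiv.addRight 1 * π) k + 1)}
        = {k : Fin n | (k : ℕ) + 1 < n ∧ π k = k} :=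
    Set.ext fun k => and_congr_right (val_foataHatInv_cyclicSucc_eq_add_one_iff π)
  refine ⟨hbij, hinj, hsurj, fun A _ => Set.ext fun f => ⟨?_, ?_⟩⟩
  · rintro ⟨π, rfl, rfl⟩
    exact ⟨hbij π, hsucc π⟩
  · rintro ⟨hf, rfl⟩
    obtain ⟨π, rfl⟩ := hsurj f hf
    exact ⟨π, (hsucc π).symm, rfl⟩
end

section
/- Let C_n denote the set of n-cycles in S_n and, for an n-cycle σ, let Θ_n(σ) = {j ∈ [n] : σ(j) = j+1 mod n}. Then for any subset {k_1,...,k_m} ⊆ [n], #{τ ∈ C_n : Θ_n(τ) = {k_1,...,k_m}} = #{σ ∈ C_{n-m} : Θ_{n-m}(σ) = ∅}. -/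
/-- `σ` consists of a single cycle through all of `Fin n` (an `n`-cycle). -/
def IsFullCycle {n : ℕ} (σ : Equiv.Perm (Fin n)) : Prop :=
  ∀ x y : Fin n, ∃ i : ℕ, (σ ^ i) x = y

/-!
Let `s` be the cyclic successor and `S` the complement of `K`. A permutation `τ` agrees with `s`
exactly on `K` iff `τ = s * ρ` for a permutation `ρ` fixing `K` pointwise and moving every point
of `S`. Since `τ` agrees with `s` off `S`, the first-return map of `τ` to `S` is `ν * ρ|_S`, where
`ν` is the first-return map of `s` to `S`; and `τ` is a full cycle iff its first-return map is one,
since every orbit of `τ` meets `S`. So `τ ↦ ν * ρ|_S` is a bijection onto the full cycles of `S`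
that agree with `ν` nowhere, and `ν`, a full cycle on the `n - m` points of `S`, is conjugate to
the cyclic successor of `Fin (n - m)`.
-/

lemma val_finRotate {n : ℕ} (i : Fin n) : (finRotate n i : ℕ) = (i + 1) % n := by
  have := i.neZero
  rw [finRotate_apply, Fin.val_add, Fin.val_one', Nat.add_mod_mod]

namespace Equiv.Perm

variable {α β : Type*}

/-- The paper's `{τ ∈ C_n : Θ_n(τ) = K}`, with `s` in place of the successor `j ↦ j + 1`. -/
def fullCyclesAgreeingExactlyOn (s : Perm α) (K : Set α) : Set (Perm α) :=
  {τ | (∀ x y, τ.SameCycle x y) ∧ {x | τ x = s x} = K}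

section Conjugation

lemma sameCycle_permCongr (e : α ≃ β) (σ : Perm α) {a b : α} :
    (e.permCongr σ).SameCycle (e a) (e b) ↔ σ.SameCycle a b := by
  refine exists_congr fun i => ?_
  rw [← e.permCongrHom_coe, ← map_zpow, e.permCongrHom_coe, permCongr_apply, symm_apply_apply,
    e.injective.eq_iff]

theorem ncard_fullCyclesAgreeingExactlyOn_congr (e : α ≃ β) {ν : Perm α} {ν' : Perm β}
    (he : ∀ a, e (ν a) = ν' (e a)) (K : Set α) :
    (fullCyclesAgreeingExactlyOn ν' (e '' K)).ncard = (fullCyclesAgreeingExactlyOn ν K).ncard := by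
  rw [← Set.ncard_preimage_of_injective_subset_range e.permCongr.injective
    (by simp [e.permCongr.surjective.range_eq])]
  congr 1
  ext σ
  have hagree : {b | e.permCongr σ b = ν' b} = e '' {a | σ a = ν a} := by
    rw [e.image_eq_preimage_symm]
    ext b
    obtain ⟨a, rfl⟩ := e.surjective b
    simp only [Set.mem_ofPred_eq, Set.mem_preimage, permCongr_apply, symm_apply_apply, ← he,
      e.injective.eq_iff]
  simp only [fullCyclesAgreeingExactlyOn, Set.mem_preimage, Set.mem_ofPred_eq, e.surjective.forall,
    sameCycle_permCongr, hagree, (Set.image_injective.mpr e.injective).eq_iff]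

lemma exists_equiv_fin_finRotate [Fintype α] {ν : Perm α} (hν : ∀ a b, ν.SameCycle a b) {c : ℕ}
    (hc : Fintype.card α = c) : ∃ e : Fin c ≃ α, ∀ i, e (finRotate c i) = ν (e i) := by
  rcases isEmpty_or_nonempty α with hα | ⟨⟨x₀⟩⟩
  · subst hc
    exact ⟨(Fintype.equivFin α).symm, fun i => isEmptyElim ((Fintype.equivFin α).symm i)⟩
  have hper : x₀ ∈ Function.periodicPts ν :=
    ⟨orderOf ν, orderOf_pos ν, by rw [Function.IsPeriodicPt, Function.IsFixedPt, ← coe_pow,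
      pow_orderOf_eq_one, one_apply]⟩
  have hP := Function.minimalPeriod_pos_of_mem_periodicPts hper
  have hbij : Function.Bijective fun i : Fin (Function.minimalPeriod ν x₀) => ν^[i] x₀ := by
    refine ⟨fun i j h => Fin.ext (Function.iterate_injOn_Iio_minimalPeriod i.2 j.2 h),
      fun y => ?_⟩
    obtain ⟨k, hk⟩ := (hν x₀ y).exists_nat_pow_eq
    exact ⟨⟨k % _, Nat.mod_lt _ hP⟩, by
      dsimp only; rw [Function.iterate_mod_minimalPeriod_eq, ← coe_pow, hk]⟩
  obtain rfl : Function.minimalPeriod ν x₀ = c := by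
    rw [← hc, ← Fintype.card_of_bijective hbij, Fintype.card_fin]
  refine ⟨Equiv.ofBijective _ hbij, fun i => ?_⟩
  rw [ofBijective_apply, ofBijective_apply, val_finRotate, Function.iterate_mod_minimalPeriod_eq,
    Function.iterate_succ_apply']

end Conjugation

section EqOn

variable {p : α → Prop} {τ s : Perm α}

lemma pow_apply_eq_of_eqOn (hτs : Set.EqOn τ s {x | ¬ p x}) {x : α} {i : ℕ}
    (h : ∀ j < i, ¬ p ((s ^ j) x)) : (τ ^ i) x = (s ^ i) x := by
  induction i with
  | zero => rfl
  | succ i ih =>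
    rw [pow_succ', mul_apply, ih fun j hj => h j (by omega), hτs (h i i.lt_succ_self),
      pow_succ', mul_apply]

lemma exists_mem_sameCycle_of_eqOn [Finite α] (hτs : Set.EqOn τ s {x | ¬ p x})
    (hs : ∀ x y, s.SameCycle x y) {a₀ : α} (ha₀ : p a₀) (x : α) : ∃ a, p a ∧ τ.SameCycle x a := by
  classical
  have hex : ∃ i, p ((s ^ i) x) := let ⟨i, hi⟩ := (hs x a₀).exists_nat_pow_eq; ⟨i, hi ▸ ha₀⟩
  refine ⟨(s ^ Nat.find hex) x, Nat.find_spec hex, ?_⟩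
  rw [← pow_apply_eq_of_eqOn hτs fun j hj => Nat.find_min hex hj]
  exact sameCycle_pow_right.mpr (SameCycle.refl _ _)

variable [DecidablePred p] (s) (ρ : Perm (Subtype p))

lemma eqOn_mul_ofSubtype : Set.EqOn (s * ofSubtype ρ) s {x | ¬ p x} := fun _ hx => by
  rw [mul_apply, ofSubtype_apply_of_not_mem ρ hx]

lemma setOf_mul_ofSubtype_apply_eq_iff :
    {x | (s * ofSubtype ρ) x = s x} = {x | ¬ p x} ↔ ∀ a, ρ a ≠ a := by
  simp only [mul_apply, s.injective.eq_iff, Set.ext_iff, Set.mem_ofPred_eq]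
  refine ⟨fun h a ha => (h a).mp (by rw [ofSubtype_apply_coe, ha]) a.2, fun h x => ?_⟩
  by_cases hx : p x
  · rw [ofSubtype_apply_of_mem ρ hx]
    exact iff_of_false (fun e => h _ (Subtype.ext e)) (not_not.mpr hx)
  · exact iff_of_true (ofSubtype_apply_of_not_mem ρ hx) hx

lemma mem_range_mul_ofSubtype_of_eqOn (h : Set.EqOn τ s {x | ¬ p x}) :
    τ ∈ Set.range fun ρ : Perm (Subtype p) => s * ofSubtype ρ := by
  have hfix : ∀ x, ¬ p x → (s⁻¹ * τ) x = x := fun x hx => by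
    rw [mul_apply, h hx, ← mul_apply, inv_mul_cancel, one_apply]
  refine ⟨(Perm.subtypeEquivSubtypePerm p).symm ⟨s⁻¹ * τ, hfix⟩, ?_⟩
  have hρ : ofSubtype ((Perm.subtypeEquivSubtypePerm p).symm ⟨s⁻¹ * τ, hfix⟩) = s⁻¹ * τ :=
    congrArg Subtype.val ((Perm.subtypeEquivSubtypePerm p).apply_symm_apply ⟨s⁻¹ * τ, hfix⟩)
  simp only [hρ, mul_inv_cancel_left]

end EqOn

section FirstReturn

variable [Finite α] (τ : Perm α) (p : α → Prop)

lemma exists_pos_pow_apply_mem {x : α} (hx : p x) : ∃ i, 0 < i ∧ p ((τ ^ i) x) :=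
  ⟨orderOf τ, orderOf_pos τ, by rwa [pow_orderOf_eq_one, one_apply]⟩

variable [DecidablePred p]

noncomputable def returnTime (a : Subtype p) : ℕ := Nat.find (exists_pos_pow_apply_mem τ p a.2)

variable {τ p}

lemma returnTime_pos (a : Subtype p) : 0 < returnTime τ p a :=
  (Nat.find_spec (exists_pos_pow_apply_mem τ p a.2)).1

lemma pow_returnTime_apply_mem (a : Subtype p) : p ((τ ^ returnTime τ p a) a) :=
  (Nat.find_spec (exists_pos_pow_apply_mem τ p a.2)).2

lemma not_pow_apply_mem_of_lt_returnTime {a : Subtype p} {j : ℕ} (hj : 0 < j)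
    (hjr : j < returnTime τ p a) : ¬ p ((τ ^ j) a) :=
  fun h => Nat.find_min _ hjr ⟨hj, h⟩

lemma returnTime_le {a : Subtype p} {i : ℕ} (hi : 0 < i) (h : p ((τ ^ i) a)) :
    returnTime τ p a ≤ i :=
  Nat.find_min' _ ⟨hi, h⟩

lemma returnTime_eq {a : Subtype p} {i : ℕ} (hi : 0 < i) (h : p ((τ ^ i) a))
    (hmin : ∀ j, 0 < j → j < i → ¬ p ((τ ^ j) a)) : returnTime τ p a = i :=
  (returnTime_le hi h).antisymm <| not_lt.mp fun hlt =>
    hmin _ (returnTime_pos a) hlt (pow_returnTime_apply_mem a)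

lemma eq_of_pow_returnTime_apply_eq {a b : Subtype p}
    (h : (τ ^ returnTime τ p a) a = (τ ^ returnTime τ p b) b)
    (hab : returnTime τ p a ≤ returnTime τ p b) : a = b := by
  obtain ⟨d, hd⟩ := Nat.exists_eq_add_of_le hab
  rw [hd, pow_add, mul_apply, (τ ^ _).injective.eq_iff] at h
  rcases Nat.eq_zero_or_pos d with rfl | hd0
  · exact Subtype.ext (by simpa using h)
  · refine absurd (h ▸ a.2) (not_pow_apply_mem_of_lt_returnTime hd0 ?_)
    have := returnTime_pos (τ := τ) a
    omega

lemma pow_returnTime_apply_injective :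
    Function.Injective fun a : Subtype p => (τ ^ returnTime τ p a) (a : α) := by
  intro a b h
  rcases le_total (returnTime τ p a) (returnTime τ p b) with hab | hba
  · exact eq_of_pow_returnTime_apply_eq h hab
  · exact (eq_of_pow_returnTime_apply_eq h.symm hba).symm

variable (τ p)

noncomputable def firstReturn : Perm (Subtype p) :=
  Equiv.ofBijective (fun a => ⟨(τ ^ returnTime τ p a) a, pow_returnTime_apply_mem a⟩) <|
    Finite.injective_iff_bijective.mp fun _ _ h =>
      pow_returnTime_apply_injective (congrArg Subtype.val h)

variable {τ p}

lemma coe_firstReturn_apply (a : Subtype p) :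
    (firstReturn τ p a : α) = (τ ^ returnTime τ p a) a := rfl

lemma SameCycle.of_firstReturn {a b : Subtype p} (h : (firstReturn τ p).SameCycle a b) :
    τ.SameCycle a b := by
  obtain ⟨j, rfl⟩ := h.exists_nat_pow_eq
  clear h
  induction j with
  | zero => exact SameCycle.refl _ _
  | succ j ih => rw [pow_succ', mul_apply, coe_firstReturn_apply]; exact sameCycle_pow_right.mpr ih

lemma sameCycle_firstReturn_of_pow_apply_eq (i : ℕ) :
    ∀ {a b : Subtype p}, (τ ^ i) a = b → (firstReturn τ p).SameCycle a b := by
  induction i using Nat.strong_induction_on with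
  | _ i ih =>
    intro a b h
    rcases Nat.eq_zero_or_pos i with rfl | hi
    · exact Subtype.ext h ▸ SameCycle.refl _ _
    · have hr := returnTime_le hi (h ▸ b.2 : p ((τ ^ i) a))
      have hsplit : (τ ^ (i - returnTime τ p a)) (firstReturn τ p a) = b := by
        rw [coe_firstReturn_apply, ← mul_apply, ← pow_add, Nat.sub_add_cancel hr, h]
      exact sameCycle_apply_left.mp (ih _ (Nat.sub_lt hi (returnTime_pos a)) hsplit)

lemma sameCycle_firstReturn_iff {a b : Subtype p} :
    (firstReturn τ p).SameCycle a b ↔ τ.SameCycle a b :=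
  ⟨SameCycle.of_firstReturn, fun h =>
    let ⟨_, hi⟩ := h.exists_nat_pow_eq; sameCycle_firstReturn_of_pow_apply_eq _ hi⟩

end FirstReturn

section MulOfSubtype

variable [Finite α] {p : α → Prop} [DecidablePred p] (s : Perm α) (ρ : Perm (Subtype p))

lemma mul_ofSubtype_pow_succ_apply (a : Subtype p) {k : ℕ} (hk : k < returnTime s p (ρ a)) :
    ((s * ofSubtype ρ) ^ (k + 1)) a = (s ^ (k + 1)) (ρ a) := by
  rw [pow_succ, mul_apply, mul_apply, ofSubtype_apply_coe, pow_succ, mul_apply]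
  refine pow_apply_eq_of_eqOn (eqOn_mul_ofSubtype s ρ) fun j hj => ?_
  rw [← mul_apply, ← pow_succ]
  exact not_pow_apply_mem_of_lt_returnTime j.succ_pos (by omega)

lemma firstReturn_mul_ofSubtype :
    firstReturn (s * ofSubtype ρ) p = firstReturn s p * ρ := by
  ext a
  have hr := returnTime_pos (τ := s) (ρ a)
  obtain ⟨k, hk⟩ : ∃ k, returnTime s p (ρ a) = k + 1 := ⟨_, (Nat.succ_pred_eq_of_pos hr).symm⟩
  have hret : returnTime (s * ofSubtype ρ) p a = returnTime s p (ρ a) := by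
    refine returnTime_eq hr ?_ fun j hj hjr => ?_
    · rw [hk, mul_ofSubtype_pow_succ_apply s ρ a (by omega), ← hk]
      exact pow_returnTime_apply_mem _
    · obtain ⟨j, rfl⟩ : ∃ i, j = i + 1 := ⟨j - 1, by omega⟩
      rw [mul_ofSubtype_pow_succ_apply s ρ a (by omega)]
      exact not_pow_apply_mem_of_lt_returnTime j.succ_pos hjr
  rw [mul_apply, coe_firstReturn_apply, coe_firstReturn_apply, hret, hk,
    mul_ofSubtype_pow_succ_apply s ρ a (by omega)]

lemma forall_sameCycle_mul_ofSubtype_iff (hs : ∀ x y, s.SameCycle x y) :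
    (∀ x y, (s * ofSubtype ρ).SameCycle x y) ↔ ∀ a b, (firstReturn s p * ρ).SameCycle a b := by
  rw [← firstReturn_mul_ofSubtype]
  refine ⟨fun h a b => sameCycle_firstReturn_iff.mpr (h a b), fun h x y => ?_⟩
  by_cases hS : ∃ a, p a
  · obtain ⟨a₀, ha₀⟩ := hS
    obtain ⟨a, ha, hxa⟩ := exists_mem_sameCycle_of_eqOn (eqOn_mul_ofSubtype s ρ) hs ha₀ x
    obtain ⟨b, hb, hyb⟩ := exists_mem_sameCycle_of_eqOn (eqOn_mul_ofSubtype s ρ) hs ha₀ y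
    exact hxa.trans ((sameCycle_firstReturn_iff.mp (h ⟨a, ha⟩ ⟨b, hb⟩)).trans hyb.symm)
  · rw [show s * ofSubtype ρ = s from
      Equiv.ext fun x => eqOn_mul_ofSubtype s ρ fun hx => hS ⟨x, hx⟩]
    exact hs x y

theorem ncard_fullCyclesAgreeingExactlyOn_eq_firstReturn (hs : ∀ x y, s.SameCycle x y) :
    (fullCyclesAgreeingExactlyOn s {x | ¬ p x}).ncard =
      (fullCyclesAgreeingExactlyOn (firstReturn s p) ∅).ncard := by
  have hderange : ∀ ρ : Perm (Subtype p), {a | (firstReturn s p * ρ) a = firstReturn s p a} = ∅ ↔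
      ∀ a, ρ a ≠ a := by
    simp [Set.eq_empty_iff_forall_notMem, mul_apply, (firstReturn s p).injective.eq_iff]
  have hL : (fun ρ => s * ofSubtype ρ) ⁻¹' fullCyclesAgreeingExactlyOn s {x | ¬ p x} =
      (firstReturn s p * ·) ⁻¹' fullCyclesAgreeingExactlyOn (firstReturn s p) ∅ := by
    ext ρ
    simp only [fullCyclesAgreeingExactlyOn, Set.mem_preimage, Set.mem_ofPred_eq,
      forall_sameCycle_mul_ofSubtype_iff s ρ hs, setOf_mul_ofSubtype_apply_eq_iff, hderange]
  rw [← Set.ncard_preimage_of_injective_subset_range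
      (f := fun ρ : Perm (Subtype p) => s * ofSubtype ρ)
      (fun _ _ h => ofSubtype_injective (mul_left_cancel h)), hL,
    Set.ncard_preimage_of_injective_subset_range (mul_right_injective (firstReturn s p))
      fun σ _ => ⟨(firstReturn s p)⁻¹ * σ, mul_inv_cancel_left _ _⟩]
  rintro τ ⟨-, hτ⟩
  exact mem_range_mul_ofSubtype_of_eqOn s fun x hx => (Set.ext_iff.mp hτ x).mpr hx

end MulOfSubtype

end Equiv.Perm

open Equiv.Perm

lemma cyclicSucc_eq_finRotate {n : ℕ} (j : Fin n) : cyclicSucc j = finRotate n j :=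
  Fin.ext (val_finRotate j).symm

lemma isFullCycle_iff_forall_sameCycle {n : ℕ} (σ : Equiv.Perm (Fin n)) :
    IsFullCycle σ ↔ ∀ x y, σ.SameCycle x y :=
  ⟨fun h x y => let ⟨_, hi⟩ := h x y; hi ▸ sameCycle_pow_right.mpr (SameCycle.refl _ _),
    fun h x y => (h x y).exists_nat_pow_eq⟩

lemma sameCycle_finRotate : ∀ {n : ℕ} (x y : Fin n), (finRotate n).SameCycle x y
  | 0, x, _ => x.elim0
  | 1, x, y => Subsingleton.elim x y ▸ SameCycle.refl _ _
  | _ + 2, x, y =>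
    have hmoved (z : Fin _) : finRotate _ z ≠ z :=
      mem_support.mp (support_finRotate ▸ Finset.mem_univ z)
    isCycle_finRotate.sameCycle (hmoved x) (hmoved y)

theorem stmt12_general (n m : ℕ) (K : Finset (Fin n)) (hcard : K.card = m) :
    Set.ncard {τ : Equiv.Perm (Fin n) | IsFullCycle τ ∧
        {j : Fin n | τ j = cyclicSucc j} = (K : Set (Fin n))}
    =
    Set.ncard {σ : Equiv.Perm (Fin (n - m)) | IsFullCycle σ ∧
        {j : Fin (n - m) | σ j = cyclicSucc j} = ∅} := by
  have hK : (K : Set (Fin n)) = {x | ¬ x ∉ K} := by ext; simp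
  have hcompl : Fintype.card {x // x ∉ K} = n - m := by simp [Fintype.card_subtype_compl, hcard]
  obtain ⟨e, he⟩ := exists_equiv_fin_finRotate (ν := firstReturn (finRotate n) (· ∉ K))
    (fun a b => sameCycle_firstReturn_iff.mpr (sameCycle_finRotate (a : Fin n) b)) hcompl
  simp only [isFullCycle_iff_forall_sameCycle, cyclicSucc_eq_finRotate, hK]
  change (fullCyclesAgreeingExactlyOn _ _).ncard = (fullCyclesAgreeingExactlyOn _ _).ncard
  rw [ncard_fullCyclesAgreeingExactlyOn_eq_firstReturn _ sameCycle_finRotate, ← Set.image_empty e,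
    ncard_fullCyclesAgreeingExactlyOn_congr e he]

/-- Let `C_n` be the set of `n`-cycles in `S_n` and, for `σ ∈ C_n`, let
`Θ_n(σ) = {j ∈ [n] : σ(j) = j+1 mod n}`.  Then for any `m`-element subset `K ⊆ [n]`,
`#{τ ∈ C_n : Θ_n(τ) = K} = #{σ ∈ C_{n-m} : Θ_{n-m}(σ) = ∅}`. -/
theorem stmt12 (n m : ℕ) (hm : m ≤ n) (K : Finset (Fin n)) (hcard : K.card = m) :
    Set.ncard {τ : Equiv.Perm (Fin n) | IsFullCycle τ ∧
        {j : Fin n | τ j = cyclicSucc j} = (K : Set (Fin n))}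
    =
    Set.ncard {σ : Equiv.Perm (Fin (n - m)) | IsFullCycle σ ∧
        {j : Fin (n - m) | σ j = cyclicSucc j} = ∅} :=
  stmt12_general n m K hcard
end

section
/- If Π_n is a uniform random permutation of [n] and Γ_{n+1} is a uniform random (n+1)-cycle in S_{n+1}, then the random sets F_n = {k ∈ [n] : Π_n(k) = k} and G_n = {k ∈ [n] : Γ_{n+1}(k) = k+1} have the same distribution (as random subsets of [n]). -/
open Equiv Equiv.Perm Finset Nat

theorem eq_of_sum_Ici_eq {P M : Type*} [PartialOrder P] [Finite P] [LocallyFiniteOrderTop P]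
    [AddCancelCommMonoid M] {f g : P → M} (h : ∀ a, ∑ b ∈ Ici a, f b = ∑ b ∈ Ici a, g b) :
    f = g := by
  funext a
  induction a using WellFoundedGT.induction with
  | _ a ih =>
    have := h a
    rw [← add_sum_Ioi_eq_sum_Ici, ← add_sum_Ioi_eq_sum_Ici,
      sum_congr rfl fun b hb => ih b (mem_Ioi.1 hb)] at this
    exact add_right_cancel this

theorem ncard_eq_sum_ncard_fiber {X M : Type*} [Finite X] [DecidableEq M] (p : X → Prop)
    {F : X → M} {t : Finset M} (h : ∀ x, p x → F x ∈ t) :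
    {x | p x}.ncard = ∑ b ∈ t, {x | p x ∧ F x = b}.ncard := by
  classical
  cases nonempty_fintype X
  simp only [Set.ncard_eq_toFinset_card', Set.toFinset_ofPred]
  rw [card_eq_sum_card_fiberwise (f := F) (t := t)
    fun x hx => by simpa using h x (by simpa using hx)]
  simp only [filter_filter]

theorem sum_Ici_ncard_fiber {X P : Type*} [Finite X] [PartialOrder P] [LocallyFiniteOrderTop P]
    [DecidableEq P] (p : X → Prop) (F : X → P) (a : P) :
    ∑ b ∈ Ici a, {x | p x ∧ F x = b}.ncard = {x | p x ∧ a ≤ F x}.ncard := by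
  rw [ncard_eq_sum_ncard_fiber _ (t := Ici a) (F := F) fun x hx => mem_Ici.2 hx.2]
  refine sum_congr rfl fun b hb => congrArg _ (Set.ext fun x => ?_)
  exact ⟨fun ⟨hx, hxb⟩ => ⟨⟨hx, hxb ▸ mem_Ici.1 hb⟩, hxb⟩, fun ⟨⟨hx, _⟩, hxb⟩ => ⟨hx, hxb⟩⟩

theorem ncard_perm_subset_fixed {α : Type*} [Finite α] (s : Set α) :
    {π : Perm α | s ⊆ {x | π x = x}}.ncard = (Nat.card α - s.ncard)! := by
  classical
  rw [← Nat.card_coe_set_eq]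
  have e : {π : Perm α | s ⊆ {x | π x = x}} ≃ Perm ↥sᶜ :=
    (Equiv.subtypeEquivRight fun π => by simp [Set.subset_def]).trans
      (Perm.subtypeEquivSubtypePerm (· ∈ sᶜ)).symm
  rw [Nat.card_congr e, Nat.card_perm, Nat.card_coe_set_eq, Set.ncard_compl]

theorem Equiv.Perm.SameCycle.map_of_sameCycle_apply {α β : Type*} {σ : Perm α} {τ : Perm β}
    {f : α → β} (hf : ∀ x, τ.SameCycle (f x) (f (σ x))) {x y : α} (h : σ.SameCycle x y) :
    τ.SameCycle (f x) (f y) := by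
  obtain ⟨i, rfl⟩ := h
  induction i using Int.induction_on with
  | zero => rfl
  | succ i ih =>
    rw [add_comm, zpow_add, zpow_one, mul_apply]
    exact ih.trans (hf _)
  | pred i ih =>
    rw [sub_eq_neg_add, zpow_add, zpow_neg_one, mul_apply]
    refine ih.trans ?_
    simpa using (hf (σ⁻¹ ((σ ^ (-(i : ℤ))) x))).symm

theorem isFullCycle_iff_sameCycle {n : ℕ} {σ : Perm (Fin n)} :
    IsFullCycle σ ↔ ∀ x y, σ.SameCycle x y :=
  ⟨fun h x y => let ⟨i, hi⟩ := h x y; ⟨i, by simpa using hi⟩,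
    fun h x y => (h x y).exists_nat_pow_eq⟩

section insertBefore
variable {n : ℕ} (w : Fin (n + 1)) (a : Fin n) (τ : Perm (Fin n))

/-- `τ` with the new point `w` spliced into its cycle just before `a`, where `Fin n` is identified
with the complement of `w` through `w.succAbove`: `w ↦ a`, and the old preimage of `a` now maps
to `w`. -/
def insertBefore : Perm (Fin (n + 1)) :=
  (finSuccEquiv' w).symm.permCongr (decomposeOption.symm (some a, τ))

def contract (X : Fin (n + 1)) : Fin n := (finSuccEquiv' w X).getD a

@[simp]
theorem insertBefore_apply_self : insertBefore w a τ w = w.succAbove a := by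
  simp [insertBefore, permCongr_apply]

theorem insertBefore_apply_succAbove (x : Fin n) :
    insertBefore w a τ (w.succAbove x) = if τ x = a then w else w.succAbove (τ x) := by
  split_ifs with h
  · simp [insertBefore, permCongr_apply, h]
  · simp [insertBefore, permCongr_apply, swap_apply_of_ne_of_ne, h]

@[simp] theorem contract_self : contract w a w = a := by simp [contract]

@[simp] theorem contract_succAbove (x : Fin n) : contract w a (w.succAbove x) = x := by
  simp [contract]

theorem insertBefore_injective : Function.Injective (insertBefore (n := n) w a) :=
  ((finSuccEquiv' w).symm.permCongr.injective.comp decomposeOption.symm.injective).comp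
    (Prod.mk_right_injective _)

theorem range_insertBefore : Set.range (insertBefore w a) = {σ | σ w = w.succAbove a} := by
  ext σ
  refine ⟨by rintro ⟨τ, rfl⟩; simp, fun hσ => ?_⟩
  set ρ := ((finSuccEquiv' w).symm.permCongr).symm σ
  refine ⟨removeNone ρ, ?_⟩
  have : ρ none = some a := by simp [ρ, permCongr_apply, show σ w = _ from hσ]
  rw [insertBefore, ← this, ← decomposeOption_apply, Equiv.symm_apply_apply,
    Equiv.apply_symm_apply]

variable {w a τ}

theorem isFullCycle_insertBefore_iff : IsFullCycle (insertBefore w a τ) ↔ IsFullCycle τ := by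
  simp only [isFullCycle_iff_sameCycle]
  set σ := insertBefore w a τ
  constructor
  · intro h x y
    have hc : ∀ X, τ.SameCycle (contract w a X) (contract w a (σ X)) := by
      intro X
      rcases eq_or_ne X w with rfl | hX
      · simp [σ, SameCycle.refl]
      · obtain ⟨x, rfl⟩ := Fin.exists_succAbove_eq hX
        refine ⟨1, ?_⟩
        simp only [σ, insertBefore_apply_succAbove]
        split_ifs with h <;> simp [h]
    simpa using (h (w.succAbove x) (w.succAbove y)).map_of_sameCycle_apply hc
  · intro h
    have hs : ∀ x, σ.SameCycle (w.succAbove x) (w.succAbove (τ x)) := by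
      intro x
      by_cases hx : τ x = a
      · refine ⟨2, ?_⟩
        simp [σ, pow_two, insertBefore_apply_succAbove, hx]
      · exact ⟨1, by simp [σ, insertBefore_apply_succAbove, hx]⟩
    have hw : ∀ X, σ.SameCycle X (w.succAbove a) := by
      intro X
      rcases eq_or_ne X w with rfl | hX
      · exact ⟨1, by simp [σ]⟩
      · obtain ⟨x, rfl⟩ := Fin.exists_succAbove_eq hX
        exact (h x a).map_of_sameCycle_apply hs
    exact fun X Y => (hw X).trans (hw Y).symm

theorem ncard_preimage_insertBefore {S : Set (Perm (Fin (n + 1)))}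
    (hS : ∀ σ ∈ S, σ w = w.succAbove a) : (insertBefore w a ⁻¹' S).ncard = S.ncard :=
  Set.ncard_preimage_of_injective_subset_range (insertBefore_injective w a)
    (by rw [range_insertBefore]; exact hS)

end insertBefore

theorem Fin.succ_succAbove_eq_ite {m : ℕ} (a : Fin (m + 1)) (k : Fin m) :
    (a.succAbove k).succ = if k.succ = a then a.castSucc else a.castSucc.succAbove k.succ := by
  split_ifs with h
  · subst h; simp [Fin.succAbove_of_castSucc_lt]
  · have h' := Fin.val_ne_of_ne h
    rcases Fin.lt_or_le k.castSucc a with hk | hk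
    · rw [Fin.succAbove_of_castSucc_lt _ _ hk, Fin.succAbove_of_castSucc_lt _ _
        (by simp only [Fin.lt_def, Fin.val_castSucc, Fin.val_succ] at hk h' ⊢; omega)]
      rfl
    · rw [Fin.succAbove_of_le_castSucc _ _ hk, Fin.succAbove_of_le_castSucc _ _
        (by simp only [Fin.le_def, Fin.val_castSucc, Fin.val_succ] at hk ⊢; omega)]

theorem insertBefore_castSucc_succAbove_eq_iff {m : ℕ} {a : Fin (m + 1)} {τ : Perm (Fin (m + 1))}
    {k : Fin m} :
    insertBefore a.castSucc a τ (a.succAbove k).castSucc = (a.succAbove k).succ ↔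
      τ k.castSucc = k.succ := by
  rw [← Fin.castSucc_succAbove_castSucc, insertBefore_apply_succAbove, Fin.succ_succAbove_eq_ite]
  split_ifs with h₁ h₂ h₂ <;> simp_all [Fin.succAbove_ne, Ne.symm]

theorem ncard_isFullCycle_apply_eq {n : ℕ} (w : Fin (n + 1)) (a : Fin n) :
    {σ : Perm (Fin (n + 1)) | IsFullCycle σ ∧ σ w = w.succAbove a}.ncard =
      {τ : Perm (Fin n) | IsFullCycle τ}.ncard := by
  rw [← ncard_preimage_insertBefore fun σ hσ => hσ.2]
  congr 1
  ext τ
  simp [isFullCycle_insertBefore_iff]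

theorem ncard_isFullCycle (n : ℕ) : {σ : Perm (Fin (n + 1)) | IsFullCycle σ}.ncard = n ! := by
  induction n with
  | zero =>
    have : {σ : Perm (Fin 1) | IsFullCycle σ} = Set.univ :=
      Set.eq_univ_of_forall fun σ x y => ⟨0, Subsingleton.elim _ _⟩
    simp [this]
  | succ m ih =>
    have hfix : {σ : Perm (Fin (m + 2)) | IsFullCycle σ ∧ σ (Fin.last _) = Fin.last _} = ∅ := by
      refine Set.eq_empty_of_forall_notMem fun σ ⟨hσ, hlast⟩ => ?_
      exact Fin.succAbove_ne _ 0
        ((isFullCycle_iff_sameCycle.1 hσ _ _).eq_of_left hlast).symm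
    rw [ncard_eq_sum_ncard_fiber _ (F := fun σ => σ (Fin.last _)) (t := univ) (by simp),
      Fin.sum_univ_succAbove _ (Fin.last _), hfix]
    simp only [Set.ncard_empty, zero_add, ncard_isFullCycle_apply_eq, ih, sum_const,
      Finset.card_fin, smul_eq_mul, Nat.factorial_succ]

theorem ncard_isFullCycle_subset_successions (n : ℕ) (B : Set (Fin n)) :
    {σ : Perm (Fin (n + 1)) | IsFullCycle σ ∧ B ⊆ {k | σ k.castSucc = k.succ}}.ncard =
      (n - B.ncard)! := by
  induction n with
  | zero => simp [Set.eq_empty_of_isEmpty B, ncard_isFullCycle]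
  | succ m ih =>
    rcases B.eq_empty_or_nonempty with rfl | ⟨a, ha⟩
    · simp [ncard_isFullCycle]
    -- Contracting the succession `a ↦ a + 1` moves the points above `a` down by one.
    have hsucc : ∀ τ : Perm (Fin (m + 1)),
        B ⊆ {k | insertBefore a.castSucc a τ k.castSucc = k.succ} ↔
          a.succAbove ⁻¹' B ⊆ {k | τ k.castSucc = k.succ} := by
      intro τ
      refine ⟨fun h k hk => insertBefore_castSucc_succAbove_eq_iff.1 (h hk), fun h k hk => ?_⟩
      rcases eq_or_ne k a with rfl | hka
      · simp [Fin.succAbove_castSucc_self]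
      · obtain ⟨k, rfl⟩ := Fin.exists_succAbove_eq hka
        exact insertBefore_castSucc_succAbove_eq_iff.2 (h hk)
    rw [← ncard_preimage_insertBefore (w := a.castSucc) (a := a) fun σ hσ => by
      simpa [Fin.succAbove_castSucc_self] using hσ.2 ha]
    have hB : (a.succAbove ⁻¹' B).ncard + 1 = B.ncard := by
      rw [← Set.preimage_inter_range, Fin.range_succAbove, ← Set.sdiff_eq,
        Set.ncard_preimage_of_injective_subset_range Fin.succAbove_right_injective (by simp),
        Set.ncard_sdiff_singleton_add_one ha]
    convert ih (a.succAbove ⁻¹' B) using 2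
    · ext τ; simp [isFullCycle_insertBefore_iff, hsucc]
    · omega

/-- If `Π_n` is a uniform random permutation of `[n]` and `Γ_{n+1}` is a uniform random
`(n+1)`-cycle in `S_{n+1}`, then the random sets `F_n = {k ∈ [n] : Π_n(k) = k}` and
`G_n = {k ∈ [n] : Γ_{n+1}(k) = k+1}` have the same distribution as random subsets of
`[n]`: for every `A ⊆ [n]`, the count of permutations `π` of `[n]` with `F(π) = A`
equals the count of `(n+1)`-cycles `σ` with `{k ∈ [n] : σ(k) = k+1} = A` (both uniform
distributions having `n!` atoms). -/
theorem stmt15 (n : ℕ) (A : Set (Fin n)) :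
    Set.ncard {π : Equiv.Perm (Fin n) | {k : Fin n | π k = k} = A}
    =
    Set.ncard {σ : Equiv.Perm (Fin (n + 1)) | IsFullCycle σ ∧
        {k : Fin n | σ k.castSucc = k.succ} = A} := by
  classical
  let : LocallyFiniteOrder (Set (Fin n)) := Fintype.toLocallyFiniteOrder
  refine congrFun (eq_of_sum_Ici_eq
    (f := fun B => {π : Perm (Fin n) | {k | π k = k} = B}.ncard)
    (g := fun B => {σ : Perm (Fin (n + 1)) |
      IsFullCycle σ ∧ {k : Fin n | σ k.castSucc = k.succ} = B}.ncard)
    fun B => ?_) A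
  have hF := sum_Ici_ncard_fiber (fun _ : Perm (Fin n) => True) (fun π => {k | π k = k}) B
  simp only [true_and] at hF
  rw [hF, sum_Ici_ncard_fiber IsFullCycle
    (fun σ : Perm (Fin (n + 1)) => {k : Fin n | σ k.castSucc = k.succ}) B,
    ncard_perm_subset_fixed, Nat.card_fin, ncard_isFullCycle_subset_successions]
end

section
/- Let η be a permutation of [n] with f fixed points, and let Π be uniform on S_n. Then the expected number of fixed points of the commutator [η,Π] = η^{-1}Π^{-1}ηΠ equals n·[((n-f)/n)^2 · 1/(n-1) + (f/n)^2]. -/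
/-!
For `σ` with `f` fixed points among `n`, the commutator `σ⁻¹ π⁻¹ σ π` fixes `x` exactly when
`π (σ x) = σ (π x)`, so we count pairs `(π, x)` by `x` instead. If `σ x = x` the condition
says that `π x` is a fixed point of `σ`, which holds for `f · (n - 1)!` permutations. If
`σ x ≠ x` it says that `π x = c` and `π (σ x) = σ c` for some `c` moved by `σ`, which holds
for `(n - f) · (n - 2)!` permutations. Both counts rest on left multiplication by a
transposition permuting the fibres of `π ↦ π x`.
-/

open Finset
open scoped Nat

namespace Equiv.Perm

variable {α : Type*}

lemma commutator_apply_eq_self_iff (σ π : Perm α) (x : α) :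
    (σ⁻¹ * π⁻¹ * σ * π) x = x ↔ π (σ x) = σ (π x) := by
  rw [Perm.mul_apply, Perm.mul_apply, Perm.mul_apply, Perm.inv_eq_iff_eq, Perm.inv_eq_iff_eq,
    eq_comm]

variable [Fintype α] [DecidableEq α]

lemma card_filter_apply_eq_congr (x a b : α) :
    #{π : Perm α | π x = a} = #{π : Perm α | π x = b} :=
  card_nbij' (swap a b * ·) (swap a b * ·) (fun π hπ => by simp_all) (fun π hπ => by simp_all)
    (fun π _ => swap_mul_self_mul a b π) (fun π _ => swap_mul_self_mul a b π)

lemma card_mul_card_filter_apply_eq (x a : α) :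
    Fintype.card α * #{π : Perm α | π x = a} = (Fintype.card α)! := by
  rw [← Fintype.card_perm, ← card_univ (α := Perm α),
    card_eq_sum_card_fiberwise (f := fun π : Perm α => π x) (s := univ) (t := univ)
      fun _ _ => mem_univ _,
    sum_const_nat fun b _ => card_filter_apply_eq_congr x b a,
    card_univ]

lemma card_filter_apply_eq_and_apply_eq_congr {x y a b b' : α} (hb : b ≠ a) (hb' : b' ≠ a) :
    #{π : Perm α | π x = a ∧ π y = b} = #{π : Perm α | π x = a ∧ π y = b'} :=
  card_nbij' (swap b b' * ·) (swap b b' * ·)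
    (fun π hπ => by simp_all [swap_apply_of_ne_of_ne hb.symm hb'.symm])
    (fun π hπ => by simp_all [swap_apply_of_ne_of_ne hb.symm hb'.symm])
    (fun π _ => swap_mul_self_mul b b' π) (fun π _ => swap_mul_self_mul b b' π)

lemma card_sub_one_mul_card_filter_apply_eq_and_apply_eq {x y a b : α} (hxy : x ≠ y)
    (hab : a ≠ b) :
    (Fintype.card α - 1) * #{π : Perm α | π x = a ∧ π y = b} = #{π : Perm α | π x = a} := by
  have hmaps : Set.MapsTo (fun π : Perm α => π y) ({π : Perm α | π x = a} : Finset (Perm α))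
      (univ.erase a : Finset α) := by
    intro π hπ
    simp only [coe_filter, mem_univ, true_and, Set.mem_ofPred_eq] at hπ
    simpa using fun h => hxy (π.injective (hπ.trans h.symm))
  rw [card_eq_sum_card_fiberwise hmaps, sum_const_nat fun c hc => ?_,
    card_erase_of_mem (mem_univ a), card_univ]
  rw [filter_filter]
  exact card_filter_apply_eq_and_apply_eq_congr (ne_of_mem_erase hc) hab.symm

variable {σ : Perm α} {x : α}

lemma card_mul_card_filter_apply_comm_of_apply_eq_self (hx : σ x = x) :
    Fintype.card α * #{π : Perm α | π (σ x) = σ (π x)} =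
      #{y | σ y = y} * (Fintype.card α)! := by
  have hfilter : #{π : Perm α | π (σ x) = σ (π x)} =
      #{π : Perm α | π x ∈ ({y | σ y = y} : Finset α)} := by
    congr 1
    refine filter_congr fun π _ => ?_
    simp [hx, eq_comm]
  rw [hfilter, ← sum_card_fiberwise_eq_card_filter, mul_sum,
    sum_const_nat fun c _ => card_mul_card_filter_apply_eq x c]

lemma card_mul_card_filter_apply_comm_of_apply_ne_self (hx : σ x ≠ x) :
    Fintype.card α * (Fintype.card α - 1) * #{π : Perm α | π (σ x) = σ (π x)} =
      #{y | σ y ≠ y} * (Fintype.card α)! := by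
  have hmaps : Set.MapsTo (fun π : Perm α => π x)
      ({π : Perm α | π (σ x) = σ (π x)} : Finset (Perm α)) ({y | σ y ≠ y} : Finset α) := by
    intro π hπ
    simp only [coe_filter, mem_univ, true_and, Set.mem_ofPred_eq] at hπ ⊢
    exact fun h => hx (π.injective (hπ.trans h))
  rw [card_eq_sum_card_fiberwise hmaps, mul_sum, sum_const_nat fun c hc => ?_]
  simp only [mem_filter, mem_univ, true_and] at hc
  have hfiber : #{π ∈ ({π : Perm α | π (σ x) = σ (π x)} : Finset (Perm α)) | π x = c} =
      #{π : Perm α | π x = c ∧ π (σ x) = σ c} := by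
    rw [filter_filter]
    congr 1
    refine filter_congr fun π _ => ?_
    constructor
    · rintro ⟨h, rfl⟩; exact ⟨rfl, h⟩
    · rintro ⟨rfl, h⟩; exact ⟨h, rfl⟩
  rw [hfiber, mul_assoc, card_sub_one_mul_card_filter_apply_eq_and_apply_eq (Ne.symm hx)
    (Ne.symm hc), card_mul_card_filter_apply_eq]

lemma card_filter_apply_comm_div_factorial_of_apply_eq_self (hx : σ x = x) :
    (#{π : Perm α | π (σ x) = σ (π x)} : ℚ) / (Fintype.card α)! =
      #{y | σ y = y} / Fintype.card α := by
  have hcard : (Fintype.card α : ℚ) ≠ 0 :=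
    Nat.cast_ne_zero.2 (Fintype.card_pos_iff.2 ⟨x⟩).ne'
  rw [div_eq_div_iff (by positivity) hcard]
  exact_mod_cast (mul_comm _ _).trans (card_mul_card_filter_apply_comm_of_apply_eq_self hx)

lemma card_filter_apply_comm_div_factorial_of_apply_ne_self (hx : σ x ≠ x) :
    (#{π : Perm α | π (σ x) = σ (π x)} : ℚ) / (Fintype.card α)! =
      #{y | σ y ≠ y} / (Fintype.card α * (Fintype.card α - 1)) := by
  have hcard : 1 < Fintype.card α := Fintype.one_lt_card_iff.2 ⟨_, _, hx⟩
  have hpos : (0 : ℚ) < Fintype.card α * (Fintype.card α - 1) :=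
    mul_pos (by positivity) (sub_pos.2 (by exact_mod_cast hcard))
  rw [div_eq_div_iff (by positivity) hpos.ne']
  have := card_mul_card_filter_apply_comm_of_apply_ne_self hx
  rw [← Nat.cast_pred (by omega)]
  exact_mod_cast (mul_comm _ _).trans this

theorem sum_card_filter_commutator_apply_eq_self_div_factorial (σ : Perm α) :
    (∑ π : Perm α, (#{x | (σ⁻¹ * π⁻¹ * σ * π) x = x} : ℚ)) / (Fintype.card α)! =
      (#{y | σ y = y} : ℚ) ^ 2 / Fintype.card α +
        (#{y | σ y ≠ y} : ℚ) ^ 2 / (Fintype.card α * (Fintype.card α - 1)) := by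
  have hcount : ∑ π : Perm α, #{x | (σ⁻¹ * π⁻¹ * σ * π) x = x} =
      ∑ x, #{π : Perm α | π (σ x) = σ (π x)} := by
    simp only [card_filter, commutator_apply_eq_self_iff]
    exact sum_comm
  rw [← Nat.cast_sum, hcount, Nat.cast_sum, sum_div, ← sum_filter_add_sum_filter_not univ
    (fun x => σ x = x), sum_congr rfl fun x hx =>
      card_filter_apply_comm_div_factorial_of_apply_eq_self (mem_filter.1 hx).2,
    sum_congr rfl fun x hx =>
      card_filter_apply_comm_div_factorial_of_apply_ne_self (mem_filter.1 hx).2]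
  simp only [sum_const, nsmul_eq_mul]
  ring

end Equiv.Perm

/-- Let `η` be a permutation of `[n]` with `f` fixed points, and let `Π` be uniform on
`S_n`.  Then the expected number of fixed points of the commutator `[η,Π] = η⁻¹Π⁻¹ηΠ`
equals `n·[((n-f)/n)² · 1/(n-1) + (f/n)²]`. -/
theorem stmt17 (n : ℕ) (η : Equiv.Perm (Fin n)) (f : ℕ)
    (hf : (Finset.univ.filter (fun i : Fin n => η i = i)).card = f) :
    (∑ π : Equiv.Perm (Fin n),
        ((Finset.univ.filter (fun i : Fin n => (η⁻¹ * π⁻¹ * η * π) i = i)).card : ℚ))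
      / (Nat.factorial n : ℚ)
    =
    (n : ℚ) * ((((n : ℚ) - f) / n) ^ 2 * (1 / ((n : ℚ) - 1)) + ((f : ℚ) / n) ^ 2) := by
  have hmoved : (#{i | η i ≠ i} : ℚ) = n - f := by
    rw [← hf, eq_sub_iff_add_eq', ← Nat.cast_add, card_filter_add_card_filter_not,
      card_univ, Fintype.card_fin]
  have h := Equiv.Perm.sum_card_filter_commutator_apply_eq_self_div_factorial η
  rw [Fintype.card_fin, hf, hmoved] at h
  rw [h]
  rcases eq_or_ne (n : ℚ) 0 with hn | hn
  · simp [hn]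
  · field_simp
    ring
end
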